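/- arXiv:0901.4707 — 6 statements merged into one kernel-verified Lean document; each statement's English description precedes it below -/
import Mathlib

section
/- Let C be an m×n diagram with its white squares labelled 1,…,k in reading order. Then Pfaffian(C) = Σ sgn(V,H), where the sum runs over all decompositions (V,H) of C with excess(H) = (0,0,…,0) in (ℤ/2ℤ)^m. -/
open Finset

/-- An `m × n` diagram: each square is black or white (`true` = white).
`D i j` is the colour of the square in row `i`, column `j`. -/
abbrev Diagram (m n : ℕ) := Fin m → Fin n → Bool

/-- The finite set of white squares of a diagram. -/
def whites {m n : ℕ} (D : Diagram m n) : Finset (Fin m × Fin n) :=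
  Finset.univ.filter fun p => D p.1 p.2 = true

/-- Reading order (strict): row-by-row from top to bottom, left to right in each row. -/
def rlt {m n : ℕ} (p q : Fin m × Fin n) : Prop :=
  p.1 < q.1 ∨ (p.1 = q.1 ∧ p.2 < q.2)

instance {m n : ℕ} : DecidableRel (@rlt m n) := fun _ _ => by unfold rlt; infer_instance

/-- The label (position in reading order over the whole grid) of a square. -/
def idx {m n : ℕ} (p : Fin m × Fin n) : ℕ := p.1.val * n + p.2.val

/-- Lexicographic (reading) order on ordered pairs of squares, used to list the
edges of a matching canonically (edges of a matching have distinct left endpoints,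
so this sorts them by smaller endpoint; the sign is independent of edge order). -/
def rleE {m n : ℕ} (e f : (Fin m × Fin n) × (Fin m × Fin n)) : Prop :=
  rlt e.1 f.1 ∨ (e.1 = f.1 ∧ (rlt e.2 f.2 ∨ e.2 = f.2))

instance {m n : ℕ} : DecidableRel (@rleE m n) := fun _ _ => by unfold rleE; infer_instance

instance {m n : ℕ} : IsTrans ((Fin m × Fin n) × (Fin m × Fin n)) rleE := by
  constructor
  rintro ⟨⟨a1,a2⟩,⟨a3,a4⟩⟩ ⟨⟨b1,b2⟩,⟨b3,b4⟩⟩ ⟨⟨c1,c2⟩,⟨c3,c4⟩⟩ h1 h2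
  simp only [rleE, rlt, Fin.lt_def, Prod.mk.injEq, Fin.ext_iff] at *
  omega

instance {m n : ℕ} : IsAntisymm ((Fin m × Fin n) × (Fin m × Fin n)) rleE := by
  constructor
  rintro ⟨⟨a1,a2⟩,⟨a3,a4⟩⟩ ⟨⟨b1,b2⟩,⟨b3,b4⟩⟩ h1 h2
  simp only [rleE, rlt, Fin.lt_def, Prod.mk.injEq, Fin.ext_iff] at *
  omega

instance {m n : ℕ} : IsTotal ((Fin m × Fin n) × (Fin m × Fin n)) rleE := by
  constructor
  rintro ⟨⟨a1,a2⟩,⟨a3,a4⟩⟩ ⟨⟨b1,b2⟩,⟨b3,b4⟩⟩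
  simp only [rleE, rlt, Fin.lt_def, Prod.mk.injEq, Fin.ext_iff]
  omega

/-- Number of inversions of a list of naturals. -/
def inversions (l : List ℕ) : ℕ :=
  ((List.range l.length) ×ˢ (List.range l.length)).countP
    fun ab => ab.1 < ab.2 ∧ l.getD ab.2 0 < l.getD ab.1 0

/-- The sign of a perfect matching: list the edges `(i₁,j₁),…,(i_{m'},j_{m'})`
(each with `iₖ` before `jₖ` in reading order, edges sorted by smaller endpoint),
flatten to the sequence `i₁,j₁,i₂,j₂,…` of labels, and take `(−1)` to the number
of inversions of this sequence; this is the sign of the permutation sending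
`(1,…,2m')` to `(i₁,j₁,…,i_{m'},j_{m'})`. -/
def pmSign {m n : ℕ} (π : Finset ((Fin m × Fin n) × (Fin m × Fin n))) : ℤ :=
  (-1) ^ inversions ((π.sort rleE).flatMap fun e => [idx e.1, idx e.2])

/-- `π` is a perfect matching of the diagram `D`: a set of edges `(e₁, e₂)` with
`e₁` before `e₂` in reading order, the two endpoints in a common row or column,
and every white square of `D` belonging to exactly one edge. -/
def IsPM {m n : ℕ} (D : Diagram m n) (π : Finset ((Fin m × Fin n) × (Fin m × Fin n))) : Prop :=
  (∀ e ∈ π, rlt e.1 e.2 ∧ (e.1.1 = e.2.1 ∨ e.1.2 = e.2.2) ∧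
      e.1 ∈ whites D ∧ e.2 ∈ whites D) ∧
  ∀ p ∈ whites D, ∃! e, e ∈ π ∧ (p = e.1 ∨ p = e.2)

open Classical in
/-- The Pfaffian of a diagram: the sum of the signs of all its perfect matchings. -/
noncomputable def Pfaffian {m n : ℕ} (D : Diagram m n) : ℤ :=
  ∑ π ∈ Finset.univ.filter (fun π => IsPM D π), pmSign π

/-- The excess of a set `S` of squares: the vector in `(ℤ/2ℤ)^m` whose `i`-th
coordinate is the number of elements of `S` in row `i`, reduced mod 2. -/
def excess {m n : ℕ} (S : Finset (Fin m × Fin n)) : Fin m → ZMod 2 :=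
  fun i => ((S.filter fun p => p.1 = i).card : ZMod 2)

/-- `(V, H)` is a decomposition of the diagram `D`: `V` and `H` are disjoint,
their union is the set of white squares of `D`, and every column of `D` contains
an even number of elements of `V`. -/
def IsDecomp {m n : ℕ} (D : Diagram m n) (V H : Finset (Fin m × Fin n)) : Prop :=
  Disjoint V H ∧ V ∪ H = whites D ∧
    ∀ j : Fin n, Even ((V.filter fun p => p.2 = j).card)

/-- `inv(V)`: the number of pairs `(p, q) ∈ V × V` with `p` before `q` in reading
order (i.e. with smaller label) and `q` strictly below and strictly to the left
of `p`. -/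
def invV {m n : ℕ} (V : Finset (Fin m × Fin n)) : ℕ :=
  ((V ×ˢ V).filter fun pq =>
    rlt pq.1 pq.2 ∧ pq.1.1 < pq.2.1 ∧ pq.2.2 < pq.1.2).card

/-- `inv(V|H)`: the number of pairs `(p, q)` with `p ∈ H`, `q ∈ V` and `p` before
`q` in reading order (i.e. with smaller label). -/
def invMix {m n : ℕ} (V H : Finset (Fin m × Fin n)) : ℕ :=
  ((H ×ˢ V).filter fun pq => rlt pq.1 pq.2).card

/-- The signature `sgn(V,H) = (−1)^{inv(V) + inv(V|H)}` of a decomposition. -/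
def sgnVH {m n : ℕ} (V H : Finset (Fin m × Fin n)) : ℤ :=
  (-1) ^ (invV V + invMix V H)

/-!
Sorting a perfect matching `π` of `C` into its vertical and horizontal edges gives the pair
`(V, H)` of squares they cover; this is a decomposition with `excess H = 0`, because every
column of `V` and every row of `H` is a union of edges. Conversely `π` is recovered as a
matching of `V ∪ H` whose edges run vertically inside `V` and horizontally inside `H`, so it
suffices to show that the signed count of these matchings is `sgn(V, H)`.

This goes by induction, expanding along the first square `p` as one expands a Pfaffian along
its first row: `p` is matched to a later square `q` of its own column of `V` (or row of `H`).
Deleting `p` and `q` changes `sgn` by the sign with which the edge `pq` enters the expansion,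
up to `(-1)^(k+1)`, where `k` counts the squares of that line before `q`. The line has an even
number of squares, so these alternating factors sum to `1`.
-/
section ReadingOrder

variable {m n : ℕ}

lemma rlt_iff_idx_lt {p q : Fin m × Fin n} : rlt p q ↔ idx p < idx q := by
  obtain ⟨⟨a, ha⟩, ⟨b, hb⟩⟩ := p
  obtain ⟨⟨c, hc⟩, ⟨d, hd⟩⟩ := q
  simp only [rlt, idx, Fin.mk_lt_mk, Fin.mk.injEq]
  constructor
  · rintro (h | ⟨rfl, h⟩)
    · nlinarith
    · omega
  · intro h
    rcases lt_trichotomy a c with h' | rfl | h'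
    · exact Or.inl h'
    · exact Or.inr ⟨rfl, by omega⟩
    · nlinarith

lemma rlt_trichotomy (p q : Fin m × Fin n) : rlt p q ∨ p = q ∨ rlt q p := by
  obtain ⟨⟨a, ha⟩, ⟨b, hb⟩⟩ := p
  obtain ⟨⟨c, hc⟩, ⟨d, hd⟩⟩ := q
  simp only [rlt, Fin.mk_lt_mk, Fin.mk.injEq, Prod.mk.injEq]
  omega

lemma rlt_asymm {p q : Fin m × Fin n} (h : rlt p q) : ¬ rlt q p := by
  rw [rlt_iff_idx_lt] at *
  omega

lemma rlt_ne {p q : Fin m × Fin n} (h : rlt p q) : p ≠ q := by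
  rintro rfl
  exact rlt_asymm h h

lemma idx_injective : Function.Injective (idx : Fin m × Fin n → ℕ) := by
  intro p q h
  rcases rlt_trichotomy p q with h' | h' | h'
  all_goals first | exact h' | (rw [rlt_iff_idx_lt] at h'; omega)

end ReadingOrder

section Inversions

lemma List.countP_product {α β : Type*} (l₁ : List α) (l₂ : List β) (p : α × β → Bool) :
    (l₁ ×ˢ l₂).countP p = (l₁.map fun a => l₂.countP fun b => p (a, b)).sum := by
  induction l₁ with
  | nil => rfl
  | cons a l ih =>
    rw [List.product_cons, List.countP_append, List.countP_map, ih]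
    rfl

lemma List.countP_range_getD (l : List ℕ) (p : ℕ → Bool) :
    (List.range l.length).countP (fun i => p (l.getD i 0)) = l.countP p := by
  induction l with
  | nil => rfl
  | cons a l ih =>
    rw [List.length_cons, List.range_succ_eq_map, List.countP_cons, List.countP_map,
      List.countP_cons]
    simp only [List.getD_cons_zero, List.getD_cons_succ, Function.comp_def, ih]

lemma inversions_cons (x : ℕ) (l : List ℕ) :
    inversions (x :: l) = l.countP (· < x) + inversions l := by
  unfold inversions
  rw [List.countP_product, List.countP_product, List.length_cons, List.range_succ_eq_map]
  simp only [List.map_cons, List.map_map, List.sum_cons, Function.comp_def, List.countP_cons,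
    List.countP_map, List.getD_cons_zero, List.getD_cons_succ]
  congr 1
  · simpa using List.countP_range_getD l (· < x)
  · simp

end Inversions

section Matchings

variable {m n : ℕ}

def IsMatching (r : Fin m × Fin n → Fin m × Fin n → Prop) (W : Finset (Fin m × Fin n))
    (π : Finset ((Fin m × Fin n) × (Fin m × Fin n))) : Prop :=
  (∀ e ∈ π, rlt e.1 e.2 ∧ r e.1 e.2 ∧ e.1 ∈ W ∧ e.2 ∈ W) ∧
  ∀ p ∈ W, ∃! e, e ∈ π ∧ (p = e.1 ∨ p = e.2)

variable {r : Fin m × Fin n → Fin m × Fin n → Prop} {W : Finset (Fin m × Fin n)}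
  {π : Finset ((Fin m × Fin n) × (Fin m × Fin n))}

namespace IsMatching

lemma eq_of_mem (h : IsMatching r W π) {e f} (he : e ∈ π) (hf : f ∈ π) {x : Fin m × Fin n}
    (hxe : x = e.1 ∨ x = e.2) (hxf : x = f.1 ∨ x = f.2) : e = f := by
  have hx : x ∈ W := by
    rcases hxe with rfl | rfl
    exacts [(h.1 e he).2.2.1, (h.1 e he).2.2.2]
  exact (h.2 x hx).unique ⟨he, hxe⟩ ⟨hf, hxf⟩

lemma sum_eq {M : Type*} [AddCommMonoid M] (h : IsMatching r W π) (f : Fin m × Fin n → M) :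
    ∑ x ∈ W, f x = ∑ e ∈ π, (f e.1 + f e.2) := by
  have hW : W = π.biUnion fun e => {e.1, e.2} := by
    ext x
    simp only [mem_biUnion, mem_insert, mem_singleton]
    refine ⟨fun hx => ?_, ?_⟩
    · obtain ⟨e, ⟨he, hxe⟩, -⟩ := h.2 x hx
      exact ⟨e, he, hxe⟩
    · rintro ⟨e, he, rfl | rfl⟩
      exacts [(h.1 e he).2.2.1, (h.1 e he).2.2.2]
  rw [hW, sum_biUnion]
  · exact sum_congr rfl fun e he => sum_pair (rlt_ne (h.1 e he).1)
  · intro e he f hf hef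
    simp only [Function.onFun, disjoint_left, mem_insert, mem_singleton]
    intro x hxe hxf
    exact hef (h.eq_of_mem he hf hxe hxf)

lemma even_card_filter (h : IsMatching r W π) (P : Fin m × Fin n → Prop) [DecidablePred P]
    (hP : ∀ e ∈ π, P e.1 ↔ P e.2) : Even #(W.filter P) := by
  rw [card_filter, h.sum_eq]
  exact even_sum _ fun e he => by simp only [hP e he]; exact ⟨_, rfl⟩

lemma erase {p q : Fin m × Fin n} (h : IsMatching r W π) (hpq : (p, q) ∈ π) :
    IsMatching r ((W.erase p).erase q) (π.erase (p, q)) := by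
  refine ⟨fun e he => ?_, fun x hx => ?_⟩
  · obtain ⟨hne, he⟩ := mem_erase.1 he
    have hp : ∀ y, y = e.1 ∨ y = e.2 → y ≠ p ∧ y ≠ q := fun y hy =>
      ⟨fun hyp => hne (h.eq_of_mem he hpq hy (.inl hyp)),
        fun hyq => hne (h.eq_of_mem he hpq hy (.inr hyq))⟩
    obtain ⟨h1, h2, h3, h4⟩ := h.1 e he
    obtain ⟨⟨h1p, h1q⟩, ⟨h2p, h2q⟩⟩ := And.intro (hp _ (.inl rfl)) (hp _ (.inr rfl))
    exact ⟨h1, h2, by simp [h1p, h1q, h3], by simp [h2p, h2q, h4]⟩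
  · obtain ⟨hxq, hxp, hxW⟩ : x ≠ q ∧ x ≠ p ∧ x ∈ W := by simpa using hx
    obtain ⟨e, ⟨he, hxe⟩, huniq⟩ := h.2 x hxW
    refine ⟨e, ⟨mem_erase.2 ⟨?_, he⟩, hxe⟩,
      fun f hf => huniq f ⟨mem_of_mem_erase hf.1, hf.2⟩⟩
    rintro rfl
    rcases hxe with rfl | rfl <;> contradiction

lemma insert {p q : Fin m × Fin n} (hp : p ∈ W) (hq : q ∈ W) (hpq : rlt p q) (hr : r p q)
    (h : IsMatching r ((W.erase p).erase q) π) :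
    IsMatching r W (insert (p, q) π) := by
  have hout : ∀ e ∈ π, ∀ y, y = e.1 ∨ y = e.2 → y ≠ p ∧ y ≠ q := by
    intro e he y hy
    have hyW : y ∈ (W.erase p).erase q := by
      rcases hy with rfl | rfl
      exacts [(h.1 e he).2.2.1, (h.1 e he).2.2.2]
    simp only [mem_erase] at hyW
    exact ⟨hyW.2.1, hyW.1⟩
  refine ⟨fun e he => ?_, fun x hx => ?_⟩
  · rcases mem_insert.1 he with rfl | he
    · exact ⟨hpq, hr, hp, hq⟩
    · obtain ⟨h1, h2, h3, h4⟩ := h.1 e he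
      exact ⟨h1, h2, mem_of_mem_erase (mem_of_mem_erase h3),
        mem_of_mem_erase (mem_of_mem_erase h4)⟩
  · by_cases hx' : x = p ∨ x = q
    · refine ⟨(p, q), ⟨mem_insert_self _ _, hx'⟩, fun f ⟨hf, hxf⟩ => ?_⟩
      rcases mem_insert.1 hf with rfl | hf
      · rfl
      · have := hout f hf x hxf
        rcases hx' with rfl | rfl <;> simp_all
    · rw [not_or] at hx'
      obtain ⟨e, ⟨he, hxe⟩, huniq⟩ := h.2 x (by simp [hx, hx'.1, hx'.2])
      refine ⟨e, ⟨mem_insert_of_mem he, hxe⟩, fun f ⟨hf, hxf⟩ => ?_⟩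
      rcases mem_insert.1 hf with rfl | hf
      · rcases hxf with h' | h' <;> simp_all
      · exact huniq f ⟨hf, hxf⟩

lemma countP_endpoints_lt (h : IsMatching r W π) (t : ℕ) :
    ((π.sort rleE).flatMap fun e => [idx e.1, idx e.2]).countP (· < t) =
      #(W.filter fun x => idx x < t) := by
  rw [List.countP_flatMap, ((sort_perm_toList π rleE).map _).sum_eq, sum_map_toList, card_filter,
    h.sum_eq]
  refine sum_congr rfl fun e _ => ?_
  simp [List.countP_cons, add_comm]

lemma pmSign_eq {p q : Fin m × Fin n} (h : IsMatching r W π) (hpq : (p, q) ∈ π)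
    (hmin : ∀ x ∈ W, x ≠ p → rlt p x) :
    pmSign π = (-1) ^ #(((W.erase p).erase q).filter (rlt · q)) * pmSign (π.erase (p, q)) := by
  have h' := h.erase hpq
  have hfirst : ∀ f ∈ π.erase (p, q), rleE (p, q) f := fun f hf =>
    .inl <| hmin f.1 (h.1 f (mem_of_mem_erase hf)).2.2.1 fun hfp =>
      ne_of_mem_erase hf (h.eq_of_mem (mem_of_mem_erase hf) hpq (.inl rfl) (.inl hfp))
  have hsort : π.sort rleE = (p, q) :: (π.erase (p, q)).sort rleE := by
    conv_lhs => rw [← insert_erase hpq]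
    exact sort_insert _ hfirst (notMem_erase _ _)
  have hbelow_p : #(((W.erase p).erase q).filter fun x => idx x < idx p) = 0 := by
    refine card_eq_zero.2 (filter_eq_empty_iff.2 fun x hx hxp => ?_)
    simp only [mem_erase] at hx
    exact absurd (rlt_iff_idx_lt.1 (hmin x hx.2.2 hx.2.1)) (by omega)
  have hqp : ¬ idx q < idx p := not_lt.2 (rlt_iff_idx_lt.1 (h.1 _ hpq).1).le
  unfold pmSign
  rw [hsort, List.flatMap_cons, List.cons_append, List.cons_append, List.nil_append,
    inversions_cons, inversions_cons, List.countP_cons, countP_endpoints_lt h', hbelow_p,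
    countP_endpoints_lt h']
  simp only [decide_eq_true_eq, hqp, if_false, ← rlt_iff_idx_lt]
  ring

lemma exists_mem_of_min {p : Fin m × Fin n} (h : IsMatching r W π) (hp : p ∈ W)
    (hmin : ∀ x ∈ W, x ≠ p → rlt p x) : ∃ q, (p, q) ∈ π := by
  obtain ⟨e, ⟨he, hpe⟩, -⟩ := h.2 p hp
  obtain ⟨hlt, -, he1, -⟩ := h.1 e he
  rcases hpe with rfl | rfl
  · exact ⟨e.2, he⟩
  · exact absurd (hmin e.1 he1 (rlt_ne hlt)) (rlt_asymm hlt)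

end IsMatching

open Classical in
noncomputable def matchingSum (r : Fin m × Fin n → Fin m × Fin n → Prop)
    (W : Finset (Fin m × Fin n)) : ℤ :=
  ∑ π ∈ univ.filter (IsMatching r W), pmSign π

lemma matchingSum_empty : matchingSum r (∅ : Finset (Fin m × Fin n)) = 1 := by
  classical
  have hunique : univ.filter (IsMatching r (∅ : Finset (Fin m × Fin n))) = {∅} := by
    ext π
    simp [IsMatching, eq_empty_iff_forall_notMem]
  simp [matchingSum, hunique, pmSign, inversions]

lemma matchingSum_congr {r' : Fin m × Fin n → Fin m × Fin n → Prop}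
    (h : ∀ a ∈ W, ∀ b ∈ W, r a b ↔ r' a b) : matchingSum r W = matchingSum r' W := by
  classical
  have hiff : ∀ π, IsMatching r W π ↔ IsMatching r' W π := fun π =>
    and_congr_left' <| forall₂_congr fun e _ => and_congr_right fun _ =>
      ⟨fun ⟨hr, h1, h2⟩ => ⟨(h _ h1 _ h2).1 hr, h1, h2⟩,
        fun ⟨hr, h1, h2⟩ => ⟨(h _ h1 _ h2).2 hr, h1, h2⟩⟩
  simp only [matchingSum, hiff]

open Classical in
lemma sum_pmSign_of_mem {p q : Fin m × Fin n} (hp : p ∈ W) (hq : q ∈ W) (hpq : rlt p q)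
    (hr : r p q) (hmin : ∀ x ∈ W, x ≠ p → rlt p x) :
    ∑ π ∈ univ.filter (fun π => IsMatching r W π ∧ (p, q) ∈ π), pmSign π =
      (-1) ^ #(((W.erase p).erase q).filter (rlt · q)) * matchingSum r ((W.erase p).erase q) := by
  rw [matchingSum, mul_sum]
  refine sum_bij' (fun π _ => π.erase (p, q)) (fun π _ => insert (p, q) π) ?_ ?_ ?_ ?_ ?_
  · intro π hπ
    simp only [mem_filter, mem_univ, true_and] at hπ ⊢
    exact hπ.1.erase hπ.2
  · intro π hπ
    simp only [mem_filter, mem_univ, true_and] at hπ ⊢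
    exact ⟨hπ.insert hp hq hpq hr, mem_insert_self _ _⟩
  · intro π hπ
    exact insert_erase (mem_filter.1 hπ).2.2
  · intro π hπ
    refine erase_insert fun hmem => ?_
    simpa using ((mem_filter.1 hπ).2.1 _ hmem).2.2.1
  · intro π hπ
    exact (mem_filter.1 hπ).2.1.pmSign_eq (mem_filter.1 hπ).2.2 hmin

open Classical in
/-- Expansion along the first square `p`, as for a Pfaffian along its first row. -/
lemma matchingSum_eq_sum_partners {p : Fin m × Fin n} (hp : p ∈ W)
    (hmin : ∀ x ∈ W, x ≠ p → rlt p x) :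
    matchingSum r W = ∑ q ∈ (W.erase p).filter (r p),
      (-1) ^ #(((W.erase p).erase q).filter (rlt · q)) * matchingSum r ((W.erase p).erase q) := by
  have hsplit : univ.filter (IsMatching r W) = ((W.erase p).filter (r p)).biUnion
      fun q => univ.filter fun π => IsMatching r W π ∧ (p, q) ∈ π := by
    ext π
    simp only [mem_filter, mem_univ, true_and, mem_biUnion, mem_erase]
    refine ⟨fun h => ?_, fun ⟨_, _, h, _⟩ => h⟩
    obtain ⟨q, hq⟩ := h.exists_mem_of_min hp hmin
    obtain ⟨hlt, hr, -, hqW⟩ := h.1 _ hq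
    exact ⟨q, ⟨⟨(rlt_ne hlt).symm, hqW⟩, hr⟩, h, hq⟩
  rw [matchingSum, hsplit, sum_biUnion]
  · refine sum_congr rfl fun q hq => ?_
    obtain ⟨⟨hqp, hqW⟩, hr⟩ : (q ≠ p ∧ q ∈ W) ∧ r p q := by simpa using hq
    exact sum_pmSign_of_mem hp hqW (hmin q hqW hqp) hr hmin
  · intro q₁ _ q₂ _ hne
    simp only [Function.onFun, disjoint_left, mem_filter, mem_univ, true_and]
    rintro π ⟨h, h₁⟩ ⟨-, h₂⟩
    exact hne (congrArg Prod.snd (h.eq_of_mem h₁ h₂ (.inl rfl) (.inl rfl)))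

end Matchings

section Ranks

lemma Finset.sum_card_filter_lt {α M : Type*} [LinearOrder α] [AddCommMonoid M] (S : Finset α)
    (f : ℕ → M) : ∑ x ∈ S, f #(S.filter (· < x)) = ∑ i ∈ range #S, f i := by
  classical
  induction S using Finset.induction_on_max with
  | empty => simp
  | insert a s ha ih =>
    have has : a ∉ s := fun h => lt_irrefl a (ha a h)
    have hbelow : ∀ x ∈ s, (insert a s).filter (· < x) = s.filter (· < x) := fun x hx => by
      rw [filter_insert, if_neg (not_lt.2 (ha x hx).le)]
    have hbelow_a : (insert a s).filter (· < a) = s := by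
      rw [filter_insert, if_neg (lt_irrefl a), filter_true_of_mem ha]
    rw [sum_insert has, card_insert_of_notMem has, sum_range_succ, hbelow_a, add_comm,
      sum_congr rfl fun x hx => by rw [hbelow x hx], ih]

variable {m n : ℕ}

lemma sum_neg_one_pow_rank {S : Finset (Fin m × Fin n)} {p : Fin m × Fin n} (hp : p ∈ S)
    (hmin : ∀ x ∈ S, x ≠ p → rlt p x) (heven : Even #S) (c : ℤ) :
    ∑ q ∈ S.erase p, (-1) ^ (#(S.filter (rlt · q)) + 1) * c = c := by
  have hrank : ∀ x ∈ S, #(S.filter (rlt · x)) = #((S.image idx).filter (· < idx x)) := by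
    intro x _
    rw [filter_image, card_image_of_injective _ idx_injective]
    simp only [rlt_iff_idx_lt]
  have htotal : ∑ x ∈ S, (-1 : ℤ) ^ (#(S.filter (rlt · x)) + 1) = 0 := by
    rw [sum_congr rfl fun x hx => by rw [hrank x hx],
      ← sum_image (f := fun t => (-1 : ℤ) ^ (#((S.image idx).filter (· < t)) + 1))
        fun x _ y _ h => idx_injective h,
      sum_card_filter_lt (S.image idx) fun i => (-1 : ℤ) ^ (i + 1),
      card_image_of_injective _ idx_injective]
    simp [pow_succ, neg_one_geom_sum, heven]
  have hp_rank : #(S.filter (rlt · p)) = 0 :=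
    card_eq_zero.2 <| filter_eq_empty_iff.2 fun x hx hxp =>
      rlt_asymm hxp (hmin x hx (rlt_ne hxp))
  rw [← add_sum_erase S _ hp, hp_rank] at htotal
  rw [← sum_mul]
  linear_combination c * htotal

end Ranks

section Signs

lemma Finset.card_filter_insert_product {α β : Type*} [DecidableEq α] (P : α × β → Prop)
    [DecidablePred P] {a : α} {s : Finset α} (ha : a ∉ s) (t : Finset β) :
    #((insert a s ×ˢ t).filter P) = #(t.filter fun b => P (a, b)) + #((s ×ˢ t).filter P) := by
  simp only [card_filter, sum_product, sum_insert ha]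

lemma Finset.card_filter_product_insert {α β : Type*} [DecidableEq β] (P : α × β → Prop)
    [DecidablePred P] (s : Finset α) {b : β} {t : Finset β} (hb : b ∉ t) :
    #((s ×ˢ insert b t).filter P) = #(s.filter fun a => P (a, b)) + #((s ×ˢ t).filter P) := by
  simp only [card_filter, sum_product, sum_insert hb, sum_add_distrib]

lemma Finset.card_filter_union_of_disjoint {α : Type*} [DecidableEq α] {s t : Finset α}
    (h : Disjoint s t) (P : α → Prop) [DecidablePred P] :
    #((s ∪ t).filter P) = #(s.filter P) + #(t.filter P) := by
  rw [filter_union, card_union_of_disjoint (disjoint_filter_filter h)]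

lemma Finset.exists_eq_insert_insert {α : Type*} [DecidableEq α] {s : Finset α} {a b : α}
    (ha : a ∈ s) (hb : b ∈ s) (hab : a ≠ b) :
    ∃ t, a ∉ t ∧ b ∉ t ∧ s = insert a (insert b t) ∧ (s.erase a).erase b = t := by
  refine ⟨(s.erase a).erase b, by simp, by simp, ?_, rfl⟩
  rw [insert_erase (mem_erase.2 ⟨hab.symm, hb⟩), insert_erase ha]

variable {m n : ℕ}

lemma invMix_insert_left {V H : Finset (Fin m × Fin n)} {a : Fin m × Fin n} (ha : a ∉ H) :
    invMix V (insert a H) = #(V.filter (rlt a)) + invMix V H :=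
  card_filter_insert_product _ ha V

lemma invMix_insert_right {V H : Finset (Fin m × Fin n)} {b : Fin m × Fin n} (hb : b ∉ V) :
    invMix (insert b V) H = #(H.filter (rlt · b)) + invMix V H :=
  card_filter_product_insert _ H hb

abbrev IsInversion (a b : Fin m × Fin n) : Prop := rlt a b ∧ a.1 < b.1 ∧ b.2 < a.2

lemma invV_insert {V : Finset (Fin m × Fin n)} {a : Fin m × Fin n} (ha : a ∉ V) :
    invV (insert a V) = #(V.filter (IsInversion a)) + #(V.filter (IsInversion · a)) + invV V := by
  rw [invV, card_filter_insert_product _ ha, card_filter_product_insert _ _ ha, filter_insert,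
    if_neg fun h => lt_irrefl _ h.2.1, add_assoc]
  rfl

lemma card_filter_rlt_add_card_filter_rlt {V : Finset (Fin m × Fin n)} {q : Fin m × Fin n}
    (hq : q ∉ V) : #(V.filter (rlt q)) + #(V.filter (rlt · q)) = #V := by
  rw [← card_filter_add_card_filter_not (s := V) (rlt q)]
  congr 2
  refine filter_congr fun x hx => ?_
  rcases rlt_trichotomy q x with h | rfl | h
  · exact ⟨fun h' => absurd h' (rlt_asymm h), fun h' => absurd h h'⟩
  · exact absurd hx hq
  · exact ⟨fun _ => rlt_asymm h, fun _ => h⟩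

lemma card_filter_filter_rlt_insert_insert {P : Fin m × Fin n → Prop} [DecidablePred P]
    {T : Finset (Fin m × Fin n)} {p q : Fin m × Fin n} (hP : P p) (hpT : p ∉ T)
    (hpq : rlt p q) :
    #(((insert p (insert q T)).filter P).filter (rlt · q)) =
      #((T.filter P).filter (rlt · q)) + 1 := by
  simp only [filter_filter]
  rw [filter_insert, if_pos ⟨hP, hpq⟩, filter_insert, if_neg fun h => rlt_asymm h.2 h.2,
    card_insert_of_notMem (by simp [hpT])]

lemma fst_eq_of_rlt_of_rlt {p x q : Fin m × Fin n} (hpx : rlt p x) (hxq : rlt x q)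
    (hpq : p.1 = q.1) : x.1 = p.1 := by
  simp only [rlt, Fin.lt_def, Fin.ext_iff] at *
  omega

lemma sgnVH_erase_horizontal {V H : Finset (Fin m × Fin n)} {p q : Fin m × Fin n}
    (hVH : Disjoint V H) (hp : p ∈ H) (hq : q ∈ H) (hqp : q ≠ p) (hrow : q.1 = p.1)
    (hmin : ∀ x ∈ V ∪ H, x ≠ p → rlt p x) :
    (-1) ^ #((V ∪ (H.erase p).erase q).filter (rlt · q)) * sgnVH V ((H.erase p).erase q) =
      (-1) ^ (#((H.filter (·.1 = p.1)).filter (rlt · q)) + 1) * sgnVH V H := by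
  have hpq : rlt p q := hmin q (mem_union_right _ hq) hqp
  have hpV : p ∉ V := disjoint_right.1 hVH hp
  have hqV : q ∉ V := disjoint_right.1 hVH hq
  obtain ⟨H, hpH, hqH, rfl, hH⟩ := exists_eq_insert_insert hp hq hqp.symm
  have hmin' : ∀ x ∈ V ∪ H, rlt p x := fun x hx => hmin x (by aesop) (by aesop)
  have hrow_between : (H.filter (·.1 = p.1)).filter (rlt · q) = H.filter (rlt · q) := by
    rw [filter_filter]
    exact filter_congr fun x hx =>
      and_iff_right_of_imp fun hxq => fst_eq_of_rlt_of_rlt (hmin' x (by simp [hx])) hxq hrow.symm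
  have hbelow := card_filter_union_of_disjoint
    (hVH.mono_right ((subset_insert _ _).trans (subset_insert _ _))) (rlt · q)
  have hmix : invMix V (insert p (insert q H)) + #(V.filter (rlt · q)) = invMix V H + 2 * #V := by
    have hall : #(V.filter (rlt p)) = #V := by
      rw [filter_true_of_mem fun x hx => hmin' x (mem_union_left _ hx)]
    rw [invMix_insert_left (by simp [hqp.symm, hpH]), invMix_insert_left hqH]
    linarith [card_filter_rlt_add_card_filter_rlt hqV]
  rw [hH, card_filter_filter_rlt_insert_insert (P := (·.1 = p.1)) rfl hpH hpq, hrow_between]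
  unfold sgnVH
  rw [← pow_add, ← pow_add]
  exact neg_one_pow_congr (by simp only [Nat.even_iff]; omega)

lemma card_filter_rlt_add_card_filter_isInversion {T : Finset (Fin m × Fin n)}
    {p q : Fin m × Fin n} (hcol : q.2 = p.2) (hT : ∀ x ∈ T, rlt p x) :
    #(T.filter (rlt · q)) + #(T.filter (IsInversion q)) =
      #((T.filter (·.2 = p.2)).filter (rlt · q)) + #(T.filter (IsInversion p)) +
        #(T.filter (IsInversion · q)) := by
  simp only [filter_filter, card_filter, ← sum_add_distrib]
  -- square by square, according as `x` lies left of, in, or right of the column of `p` and `q`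
  refine sum_congr rfl fun x hx => ?_
  have hpx := hT x hx
  simp only [IsInversion, rlt, Fin.lt_def, Fin.ext_iff] at hcol hpx ⊢
  split_ifs <;> omega

lemma sgnVH_erase_vertical {V H : Finset (Fin m × Fin n)} {p q : Fin m × Fin n}
    (hVH : Disjoint V H) (hp : p ∈ V) (hq : q ∈ V) (hqp : q ≠ p) (hcol : q.2 = p.2)
    (hmin : ∀ x ∈ V ∪ H, x ≠ p → rlt p x) :
    (-1) ^ #(((V.erase p).erase q ∪ H).filter (rlt · q)) * sgnVH ((V.erase p).erase q) H =
      (-1) ^ (#((V.filter (·.2 = p.2)).filter (rlt · q)) + 1) * sgnVH V H := by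
  have hpq : rlt p q := hmin q (mem_union_left _ hq) hqp
  have hpH : p ∉ H := disjoint_left.1 hVH hp
  have hqH : q ∉ H := disjoint_left.1 hVH hq
  obtain ⟨V, hpV, hqV, rfl, hV⟩ := exists_eq_insert_insert hp hq hqp.symm
  have hmin' : ∀ x ∈ insert q V ∪ H, rlt p x := fun x hx => hmin x (by aesop) (by aesop)
  have hbelow := card_filter_union_of_disjoint
    (hVH.mono_left ((subset_insert _ _).trans (subset_insert _ _))) (rlt · q)
  have hmix : invMix (insert p (insert q V)) H = #(H.filter (rlt · q)) + invMix V H := by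
    have hnone : #(H.filter (rlt · p)) = 0 := card_eq_zero.2 <| filter_eq_empty_iff.2
      fun x hx h => rlt_asymm h (hmin' x (mem_union_right _ hx))
    rw [invMix_insert_right (by simp [hqp.symm, hpV]), hnone, zero_add, invMix_insert_right hqV]
  have hinv : invV (insert p (insert q V)) = #(V.filter (IsInversion p)) +
      #(V.filter (IsInversion q)) + #(V.filter (IsInversion · q)) + invV V := by
    have hnone : (insert q V).filter (IsInversion · p) = ∅ := filter_eq_empty_iff.2
      fun x hx h => rlt_asymm h.1 (hmin' x (mem_union_left _ hx))
    rw [invV_insert (by simp [hqp.symm, hpV]), invV_insert hqV, hnone, filter_insert,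
      if_neg fun h => lt_irrefl _ (hcol ▸ h.2.2)]
    simp only [card_empty]
    ring
  have hpoint := card_filter_rlt_add_card_filter_isInversion (T := V) hcol
    fun x hx => hmin' x (by simp [hx])
  rw [hV, card_filter_filter_rlt_insert_insert (P := (·.2 = p.2)) rfl hpV hpq]
  unfold sgnVH
  rw [← pow_add, ← pow_add]
  exact neg_one_pow_congr (by simp only [Nat.even_iff]; omega)

end Signs

section Decompositions

variable {m n : ℕ}

def VHAdj (V H : Finset (Fin m × Fin n)) (a b : Fin m × Fin n) : Prop :=
  (a ∈ V ∧ b ∈ V ∧ a.2 = b.2) ∨ (a ∈ H ∧ b ∈ H ∧ a.1 = b.1)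

lemma vhAdj_iff_of_subset {V H V' H' : Finset (Fin m × Fin n)} (hVH : Disjoint V H)
    (hV : V' ⊆ V) (hH : H' ⊆ H) {a b : Fin m × Fin n} (ha : a ∈ V' ∪ H')
    (hb : b ∈ V' ∪ H') : VHAdj V H a b ↔ VHAdj V' H' a b := by
  have key : ∀ x ∈ V' ∪ H', (x ∈ V ↔ x ∈ V') ∧ (x ∈ H ↔ x ∈ H') := by
    intro x hx
    rcases mem_union.1 hx with hx | hx
    · exact ⟨iff_of_true (hV hx) hx, iff_of_false (disjoint_left.1 hVH (hV hx))
        fun h => disjoint_left.1 hVH (hV hx) (hH h)⟩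
    · exact ⟨iff_of_false (disjoint_right.1 hVH (hH hx))
        fun h => disjoint_right.1 hVH (hH hx) (hV h), iff_of_true (hH hx) hx⟩
  simp only [VHAdj, (key a ha).1, (key a ha).2, (key b hb).1, (key b hb).2]

lemma Finset.even_card_filter_erase_erase {α β : Type*} [DecidableEq α] [DecidableEq β]
    {f : α → β} {S : Finset α} (hS : ∀ j, Even #(S.filter (f · = j))) {p q : α}
    (hp : p ∈ S) (hq : q ∈ S) (hqp : q ≠ p) (hf : f q = f p) (j : β) :
    Even #(((S.erase p).erase q).filter (f · = j)) := by
  rw [filter_erase, filter_erase]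
  by_cases hj : f p = j
  · have h := hS j
    rw [← card_erase_add_one (mem_filter.2 ⟨hp, hj⟩),
      ← card_erase_add_one (mem_erase.2 ⟨hqp, mem_filter.2 ⟨hq, hf.trans hj⟩⟩)] at h
    simpa [Nat.even_add_one] using h
  · have hp' : p ∉ S.filter (f · = j) := by simp [hj]
    have hq' : q ∉ S.filter (f · = j) := by simp [hf, hj]
    rw [erase_eq_of_notMem hp', erase_eq_of_notMem hq']
    exact hS j

lemma IsMatching.even_card_columns {V H : Finset (Fin m × Fin n)}
    {π : Finset ((Fin m × Fin n) × (Fin m × Fin n))} (h : IsMatching (VHAdj V H) (V ∪ H) π)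
    (hVH : Disjoint V H) (j : Fin n) : Even #(V.filter (·.2 = j)) := by
  have hfilter : (V ∪ H).filter (fun x => x ∈ V ∧ x.2 = j) = V.filter (·.2 = j) := by
    ext x
    simp only [mem_filter, mem_union]
    tauto
  rw [← hfilter]
  refine h.even_card_filter _ fun e he => ?_
  rcases (h.1 e he).2.1 with ⟨h1, h2, hcol⟩ | ⟨h1, h2, -⟩
  · simp [h1, h2, hcol]
  · simp [disjoint_right.1 hVH h1, disjoint_right.1 hVH h2]

lemma IsMatching.even_card_rows {V H : Finset (Fin m × Fin n)}
    {π : Finset ((Fin m × Fin n) × (Fin m × Fin n))} (h : IsMatching (VHAdj V H) (V ∪ H) π)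
    (hVH : Disjoint V H) (i : Fin m) : Even #(H.filter (·.1 = i)) := by
  have hfilter : (V ∪ H).filter (fun x => x ∈ H ∧ x.1 = i) = H.filter (·.1 = i) := by
    ext x
    simp only [mem_filter, mem_union]
    tauto
  rw [← hfilter]
  refine h.even_card_filter _ fun e he => ?_
  rcases (h.1 e he).2.1 with ⟨h1, h2, -⟩ | ⟨h1, h2, hrow⟩
  · simp [disjoint_left.1 hVH h1, disjoint_left.1 hVH h2]
  · simp [h1, h2, hrow]

open Classical in
lemma filter_vhAdj_of_mem_left {V H : Finset (Fin m × Fin n)} (hVH : Disjoint V H)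
    {p : Fin m × Fin n} (hp : p ∈ V) :
    ((V ∪ H).erase p).filter (VHAdj V H p) = (V.filter (·.2 = p.2)).erase p := by
  ext q
  simp only [VHAdj, mem_filter, mem_erase, mem_union]
  constructor
  · rintro ⟨⟨hqp, -⟩, ⟨-, hq, hcol⟩ | ⟨hp', -⟩⟩
    exacts [⟨hqp, hq, hcol.symm⟩, absurd hp' (disjoint_left.1 hVH hp)]
  · rintro ⟨hqp, hq, hcol⟩
    exact ⟨⟨hqp, .inl hq⟩, .inl ⟨hp, hq, hcol.symm⟩⟩

open Classical in
lemma filter_vhAdj_of_mem_right {V H : Finset (Fin m × Fin n)} (hVH : Disjoint V H)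
    {p : Fin m × Fin n} (hp : p ∈ H) :
    ((V ∪ H).erase p).filter (VHAdj V H p) = (H.filter (·.1 = p.1)).erase p := by
  ext q
  simp only [VHAdj, mem_filter, mem_erase, mem_union]
  constructor
  · rintro ⟨⟨hqp, -⟩, ⟨hp', -⟩ | ⟨-, hq, hrow⟩⟩
    exacts [absurd hp' (disjoint_right.1 hVH hp), ⟨hqp, hq, hrow.symm⟩]
  · rintro ⟨hqp, hq, hrow⟩
    exact ⟨⟨hqp, .inr hq⟩, .inr ⟨hp, hq, hrow.symm⟩⟩

lemma matchingSum_vhAdj {V H : Finset (Fin m × Fin n)} (hVH : Disjoint V H)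
    (hV : ∀ j, Even #(V.filter (·.2 = j))) (hH : ∀ i, Even #(H.filter (·.1 = i))) :
    matchingSum (VHAdj V H) (V ∪ H) = sgnVH V H := by
  induction hc : #(V ∪ H) using Nat.strong_induction_on generalizing V H with
  | _ N ih =>
  rcases (V ∪ H).eq_empty_or_nonempty with hW | hW
  · obtain ⟨rfl, rfl⟩ := union_eq_empty.1 hW
    simp [matchingSum_empty, sgnVH, invV, invMix]
  obtain ⟨p, hpW, hpmin⟩ := exists_min_image (V ∪ H) idx hW
  have hmin : ∀ x ∈ V ∪ H, x ≠ p → rlt p x := fun x hx hxp =>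
    rlt_iff_idx_lt.2 ((hpmin x hx).lt_of_ne fun h => hxp (idx_injective h).symm)
  have hrec : ∀ {V' H'}, V' ⊆ V → H' ⊆ H → p ∉ V' ∪ H' →
      (∀ j, Even #(V'.filter (·.2 = j))) → (∀ i, Even #(H'.filter (·.1 = i))) →
      matchingSum (VHAdj V H) (V' ∪ H') = sgnVH V' H' := fun hV' hH' hp' hVe hHe => by
    rw [matchingSum_congr fun a ha b hb => vhAdj_iff_of_subset hVH hV' hH' ha hb]
    refine ih _ ?_ (hVH.mono hV' hH') hVe hHe rfl
    exact hc ▸ card_lt_card ⟨union_subset_union hV' hH', fun h => hp' (h hpW)⟩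
  rw [matchingSum_eq_sum_partners hpW hmin]
  rcases mem_union.1 hpW with hp | hp
  · rw [filter_vhAdj_of_mem_left hVH hp, ← sum_neg_one_pow_rank (S := V.filter (·.2 = p.2))
      (mem_filter.2 ⟨hp, rfl⟩) (fun x hx => hmin x (mem_union_left _ (mem_filter.1 hx).1))
      (hV p.2) (sgnVH V H)]
    refine sum_congr rfl fun q hq => ?_
    obtain ⟨hqp, hq, hcol⟩ : q ≠ p ∧ q ∈ V ∧ q.2 = p.2 := by simpa using hq
    rw [← sgnVH_erase_vertical hVH hp hq hqp hcol hmin, erase_union_distrib,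
      erase_union_distrib, erase_eq_of_notMem (disjoint_left.1 hVH hp),
      erase_eq_of_notMem (disjoint_left.1 hVH hq),
      hrec ((erase_subset _ _).trans (erase_subset _ _)) subset_rfl
        (by simp [disjoint_left.1 hVH hp]) (even_card_filter_erase_erase hV hp hq hqp hcol) hH]
  · rw [filter_vhAdj_of_mem_right hVH hp, ← sum_neg_one_pow_rank (S := H.filter (·.1 = p.1))
      (mem_filter.2 ⟨hp, rfl⟩) (fun x hx => hmin x (mem_union_right _ (mem_filter.1 hx).1))
      (hH p.1) (sgnVH V H)]
    refine sum_congr rfl fun q hq => ?_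
    obtain ⟨hqp, hq, hrow⟩ : q ≠ p ∧ q ∈ H ∧ q.1 = p.1 := by simpa using hq
    rw [← sgnVH_erase_horizontal hVH hp hq hqp hrow hmin, erase_union_distrib,
      erase_union_distrib, erase_eq_of_notMem (disjoint_right.1 hVH hp),
      erase_eq_of_notMem (disjoint_right.1 hVH hq),
      hrec subset_rfl ((erase_subset _ _).trans (erase_subset _ _))
        (by simp [disjoint_right.1 hVH hp]) hV (even_card_filter_erase_erase hH hp hq hqp hrow)]

end Decompositions

section PerfectMatchings

variable {m n : ℕ}

open Classical in
def verticalPart (π : Finset ((Fin m × Fin n) × (Fin m × Fin n))) : Finset (Fin m × Fin n) :=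
  univ.filter fun x => ∃ e ∈ π, e.1.2 = e.2.2 ∧ (x = e.1 ∨ x = e.2)

open Classical in
def horizontalPart (π : Finset ((Fin m × Fin n) × (Fin m × Fin n))) : Finset (Fin m × Fin n) :=
  univ.filter fun x => ∃ e ∈ π, e.1.1 = e.2.1 ∧ (x = e.1 ∨ x = e.2)

variable {C : Diagram m n} {π : Finset ((Fin m × Fin n) × (Fin m × Fin n))}

lemma mem_verticalPart {x : Fin m × Fin n} :
    x ∈ verticalPart π ↔ ∃ e ∈ π, e.1.2 = e.2.2 ∧ (x = e.1 ∨ x = e.2) := by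
  simp [verticalPart]

lemma mem_horizontalPart {x : Fin m × Fin n} :
    x ∈ horizontalPart π ↔ ∃ e ∈ π, e.1.1 = e.2.1 ∧ (x = e.1 ∨ x = e.2) := by
  simp [horizontalPart]

lemma isPM_iff_isMatching :
    IsPM C π ↔ IsMatching (fun a b => a.1 = b.1 ∨ a.2 = b.2) (whites C) π := Iff.rfl

lemma not_vertical_and_horizontal {e : (Fin m × Fin n) × (Fin m × Fin n)} (he : rlt e.1 e.2) :
    ¬ (e.1.2 = e.2.2 ∧ e.1.1 = e.2.1) :=
  fun ⟨hcol, hrow⟩ => rlt_ne he (Prod.ext hrow hcol)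

lemma IsPM.disjoint_parts (h : IsPM C π) : Disjoint (verticalPart π) (horizontalPart π) := by
  refine disjoint_left.2 fun x hV hH => ?_
  obtain ⟨e, he, hcol, hxe⟩ := mem_verticalPart.1 hV
  obtain ⟨f, hf, hrow, hxf⟩ := mem_horizontalPart.1 hH
  obtain rfl := (isPM_iff_isMatching.1 h).eq_of_mem he hf hxe hxf
  exact not_vertical_and_horizontal (h.1 e he).1 ⟨hcol, hrow⟩

lemma IsPM.union_parts (h : IsPM C π) : verticalPart π ∪ horizontalPart π = whites C := by
  ext x
  simp only [mem_union, mem_verticalPart, mem_horizontalPart]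
  constructor
  · rintro (⟨e, he, -, rfl | rfl⟩ | ⟨e, he, -, rfl | rfl⟩)
    all_goals first | exact (h.1 e he).2.2.1 | exact (h.1 e he).2.2.2
  · intro hx
    obtain ⟨e, ⟨he, hxe⟩, -⟩ := h.2 x hx
    rcases (h.1 e he).2.1 with hrow | hcol
    exacts [.inr ⟨e, he, hrow, hxe⟩, .inl ⟨e, he, hcol, hxe⟩]

lemma IsPM.isMatching_vhAdj (h : IsPM C π) :
    IsMatching (VHAdj (verticalPart π) (horizontalPart π))
      (verticalPart π ∪ horizontalPart π) π := by
  rw [h.union_parts]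
  refine ⟨fun e he => ?_, h.2⟩
  obtain ⟨hlt, hline, h1, h2⟩ := h.1 e he
  refine ⟨hlt, ?_, h1, h2⟩
  rcases hline with hrow | hcol
  · exact .inr ⟨mem_horizontalPart.2 ⟨e, he, hrow, .inl rfl⟩,
      mem_horizontalPart.2 ⟨e, he, hrow, .inr rfl⟩, hrow⟩
  · exact .inl ⟨mem_verticalPart.2 ⟨e, he, hcol, .inl rfl⟩,
      mem_verticalPart.2 ⟨e, he, hcol, .inr rfl⟩, hcol⟩

lemma excess_eq_zero_iff {S : Finset (Fin m × Fin n)} :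
    excess S = 0 ↔ ∀ i, Even #(S.filter (·.1 = i)) := by
  simp only [funext_iff, excess, Pi.zero_apply, ZMod.natCast_eq_zero_iff_even]

lemma IsPM.isDecomp_parts (h : IsPM C π) :
    IsDecomp C (verticalPart π) (horizontalPart π) ∧ excess (horizontalPart π) = 0 :=
  ⟨⟨h.disjoint_parts, h.union_parts, h.isMatching_vhAdj.even_card_columns h.disjoint_parts⟩,
    excess_eq_zero_iff.2 (h.isMatching_vhAdj.even_card_rows h.disjoint_parts)⟩

lemma IsMatching.verticalPart_eq {V H : Finset (Fin m × Fin n)}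
    (h : IsMatching (VHAdj V H) (V ∪ H) π) (hVH : Disjoint V H) : verticalPart π = V := by
  ext x
  rw [mem_verticalPart]
  constructor
  · rintro ⟨e, he, hcol, hxe⟩
    rcases (h.1 e he).2.1 with ⟨h1, h2, -⟩ | ⟨-, -, hrow⟩
    · rcases hxe with rfl | rfl <;> assumption
    · exact absurd ⟨hcol, hrow⟩ (not_vertical_and_horizontal (h.1 e he).1)
  · intro hx
    obtain ⟨e, ⟨he, hxe⟩, -⟩ := h.2 x (mem_union_left _ hx)
    rcases (h.1 e he).2.1 with ⟨-, -, hcol⟩ | ⟨h1, h2, -⟩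
    · exact ⟨e, he, hcol, hxe⟩
    · rcases hxe with rfl | rfl
      exacts [absurd h1 (disjoint_left.1 hVH hx), absurd h2 (disjoint_left.1 hVH hx)]

lemma IsMatching.horizontalPart_eq {V H : Finset (Fin m × Fin n)}
    (h : IsMatching (VHAdj V H) (V ∪ H) π) (hVH : Disjoint V H) : horizontalPart π = H := by
  ext x
  rw [mem_horizontalPart]
  constructor
  · rintro ⟨e, he, hrow, hxe⟩
    rcases (h.1 e he).2.1 with ⟨-, -, hcol⟩ | ⟨h1, h2, -⟩
    · exact absurd ⟨hcol, hrow⟩ (not_vertical_and_horizontal (h.1 e he).1)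
    · rcases hxe with rfl | rfl <;> assumption
  · intro hx
    obtain ⟨e, ⟨he, hxe⟩, -⟩ := h.2 x (mem_union_right _ hx)
    rcases (h.1 e he).2.1 with ⟨h1, h2, -⟩ | ⟨-, -, hrow⟩
    · rcases hxe with rfl | rfl
      exacts [absurd hx (disjoint_left.1 hVH h1), absurd hx (disjoint_left.1 hVH h2)]
    · exact ⟨e, he, hrow, hxe⟩

lemma IsMatching.isPM {V H : Finset (Fin m × Fin n)} (h : IsMatching (VHAdj V H) (V ∪ H) π)
    (hW : V ∪ H = whites C) : IsPM C π := by
  rw [isPM_iff_isMatching, ← hW]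
  refine ⟨fun e he => ?_, h.2⟩
  obtain ⟨hlt, hadj, h1, h2⟩ := h.1 e he
  exact ⟨hlt, hadj.elim (fun h => .inr h.2.2) (fun h => .inl h.2.2), h1, h2⟩

lemma isPM_and_parts_iff {V H : Finset (Fin m × Fin n)} (hVH : Disjoint V H)
    (hW : V ∪ H = whites C) :
    IsPM C π ∧ (verticalPart π, horizontalPart π) = (V, H) ↔
      IsMatching (VHAdj V H) (V ∪ H) π := by
  constructor
  · rintro ⟨h, hparts⟩
    obtain ⟨rfl, rfl⟩ := Prod.mk.inj hparts
    exact h.isMatching_vhAdj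
  · intro h
    exact ⟨h.isPM hW, by rw [h.verticalPart_eq hVH, h.horizontalPart_eq hVH]⟩

end PerfectMatchings

open Classical in
/-- The Pfaffian of an `m × n` diagram equals the sum of the
signatures `sgn(V,H)` over all decompositions `(V,H)` of `C` with
`excess(H) = (0,…,0)` in `(ℤ/2ℤ)^m`. -/
theorem pfaffian_eq_sum_decompositions (m n : ℕ) (C : Diagram m n) :
    Pfaffian C =
      ∑ VH ∈ (Finset.univ :
          Finset (Finset (Fin m × Fin n) × Finset (Fin m × Fin n))).filter
          (fun VH => IsDecomp C VH.1 VH.2 ∧ excess VH.2 = 0),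
        sgnVH VH.1 VH.2 := by
  have hparts : ∀ π ∈ univ.filter (IsPM C), (verticalPart π, horizontalPart π) ∈
      univ.filter fun VH : Finset (Fin m × Fin n) × Finset (Fin m × Fin n) =>
        IsDecomp C VH.1 VH.2 ∧ excess VH.2 = 0 := by
    intro π hπ
    simpa using (mem_filter.1 hπ).2.isDecomp_parts
  rw [Pfaffian, ← sum_fiberwise_of_maps_to hparts]
  refine sum_congr rfl fun VH hVH => ?_
  obtain ⟨⟨hVH, hW, hcols⟩, hexcess⟩ := (mem_filter.1 hVH).2
  rw [← matchingSum_vhAdj hVH hcols (excess_eq_zero_iff.1 hexcess), matchingSum, filter_filter]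
  exact sum_congr (filter_congr fun π _ => isPM_and_parts_iff hVH hW) fun _ _ => rfl
end

section
/- For every positive integer m, Ex_m with the given multiplication is a group of order 4^m with identity element (0,0,+1), and every element x ∈ Ex_m satisfies x^4 = (0,0,+1). -/
open Finset

/-- The excess group `Ex_m`: triples `(v, h, ε)` with `v, h ∈ (ℤ/2ℤ)^m`,
`ε ∈ {±1}` (realized as `ℤˣ`), and the coordinates of `v` summing to `0`. -/
@[ext]
structure Ex (m : ℕ) where
  v : Fin m → ZMod 2
  h : Fin m → ZMod 2
  ε : ℤˣ
  hv : ∑ i, v i = 0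

namespace Ex

variable {m : ℕ}

/-- The exponent of `(−1)` in the product `(v,h,ε)·(v',h',ε')`:
`Σ_{1≤i<j≤m} v_j (v'_i + h'_i) + Σ_{1≤i≤j≤m} v'_j h_i`, computed from the
representatives in `{0,1}` of the `ℤ/2ℤ`-coordinates. -/
def expo (x y : Ex m) : ℕ :=
  (∑ p ∈ Finset.univ.filter (fun p : Fin m × Fin m => p.1 < p.2),
      (x.v p.2).val * ((y.v p.1).val + (y.h p.1).val)) +
  ∑ p ∈ Finset.univ.filter (fun p : Fin m × Fin m => p.1 ≤ p.2),
      (y.v p.2).val * (x.h p.1).val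

/-- The multiplication of `Ex_m`:
`(v,h,ε)·(v',h',ε') = (v+v', h+h', ε ε' (−1)^{Σ_{i<j} v_j(v'_i+h'_i) + Σ_{i≤j} v'_j h_i})`. -/
def mul' (x y : Ex m) : Ex m :=
  ⟨x.v + y.v, x.h + y.h, x.ε * y.ε * (-1) ^ expo x y, by
    simp [Finset.sum_add_distrib, x.hv, y.hv]⟩

/-- The identity element `(0, 0, +1)` of `Ex_m`. -/
def one' : Ex m := ⟨0, 0, 1, by simp⟩

/-- The element `(0, 0, −1)` of `Ex_m`. -/
def negOne' : Ex m := ⟨0, 0, -1, by simp⟩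

/-- Inversion in `Ex_m`. -/
def inv' (x : Ex m) : Ex m := ⟨x.v, x.h, x.ε * (-1) ^ expo x x, x.hv⟩

-- auxiliary: the ZMod-2-valued bilinear form underlying `expo`
private def Bf (a b c d : Fin m → ZMod 2) : ZMod 2 :=
  (∑ p ∈ Finset.univ.filter (fun p : Fin m × Fin m => p.1 < p.2),
      a p.2 * (c p.1 + d p.1)) +
  ∑ p ∈ Finset.univ.filter (fun p : Fin m × Fin m => p.1 ≤ p.2),
      c p.2 * b p.1

private def χ (a : ZMod 2) : ℤˣ := (-1) ^ a.val

private lemma χ_add : ∀ a b : ZMod 2, χ (a + b) = χ a * χ b := by decide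

private lemma val_cast : ∀ a : ZMod 2, ((a.val : ℕ) : ZMod 2) = a := by decide

private lemma neg_one_pow_nat (s : ℕ) : ((-1 : ℤˣ)) ^ s = χ ((s : ZMod 2)) := by
  induction s with
  | zero => simp [χ]
  | succ k ih =>
      rw [pow_succ, ih]
      have hc : ((k + 1 : ℕ) : ZMod 2) = ((k : ℕ) : ZMod 2) + 1 := by push_cast; ring
      have hx : ∀ a : ZMod 2, χ (a + 1) = χ a * (-1) := by decide
      rw [hc, hx]

private lemma expo_cast (x y : Ex m) :
    ((expo x y : ℕ) : ZMod 2) = Bf x.v x.h y.v y.h := by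
  unfold expo Bf
  push_cast
  simp [val_cast]

private lemma sign_eq (x y : Ex m) :
    ((-1 : ℤˣ)) ^ expo x y = χ (Bf x.v x.h y.v y.h) := by
  rw [neg_one_pow_nat, expo_cast]

private lemma Bf_add_left (a b a' b' c d : Fin m → ZMod 2) :
    Bf (a + a') (b + b') c d = Bf a b c d + Bf a' b' c d := by
  unfold Bf
  simp only [Pi.add_apply, add_mul, mul_add, Finset.sum_add_distrib]
  ring

private lemma Bf_add_right (a b c d c' d' : Fin m → ZMod 2) :
    Bf a b (c + c') (d + d') = Bf a b c d + Bf a b c' d' := by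
  unfold Bf
  simp only [Pi.add_apply, add_mul, mul_add, Finset.sum_add_distrib]
  ring

private lemma Bf_zero_left (c d : Fin m → ZMod 2) : Bf 0 0 c d = 0 := by
  unfold Bf; simp

private lemma Bf_zero_right (a b : Fin m → ZMod 2) : Bf a b 0 0 = 0 := by
  unfold Bf; simp

instance : Group (Ex m) where
  mul := mul'
  one := one'
  inv := inv'
  mul_assoc a b c := by
    refine Ex.ext ?_ ?_ ?_
    · show (a.v + b.v) + c.v = a.v + (b.v + c.v)
      exact add_assoc _ _ _
    · show (a.h + b.h) + c.h = a.h + (b.h + c.h)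
      exact add_assoc _ _ _
    · show (a.ε * b.ε * (-1) ^ expo a b) * c.ε * (-1) ^ expo (mul' a b) c =
        a.ε * (b.ε * c.ε * (-1) ^ expo b c) * (-1) ^ expo a (mul' b c)
      rw [sign_eq, sign_eq, sign_eq, sign_eq]
      have h1 : (mul' a b).v = a.v + b.v := rfl
      have h2 : (mul' a b).h = a.h + b.h := rfl
      have h3 : (mul' b c).v = b.v + c.v := rfl
      have h4 : (mul' b c).h = b.h + c.h := rfl
      rw [h1, h2, h3, h4, Bf_add_left, Bf_add_right, χ_add, χ_add]
      simp only [mul_assoc, mul_comm, mul_left_comm]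
  one_mul a := by
    refine Ex.ext ?_ ?_ ?_
    · show 0 + a.v = a.v
      exact zero_add _
    · show 0 + a.h = a.h
      exact zero_add _
    · show 1 * a.ε * (-1) ^ expo (one' : Ex m) a = a.ε
      have h0 : expo (one' : Ex m) a = 0 := by simp [expo, one']
      rw [h0]; simp
  mul_one a := by
    refine Ex.ext ?_ ?_ ?_
    · show a.v + 0 = a.v
      exact add_zero _
    · show a.h + 0 = a.h
      exact add_zero _
    · show a.ε * 1 * (-1) ^ expo a (one' : Ex m) = a.ε
      have h0 : expo a (one' : Ex m) = 0 := by simp [expo, one']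
      rw [h0]; simp
  inv_mul_cancel a := by
    refine Ex.ext ?_ ?_ ?_
    · show a.v + a.v = 0
      funext i
      exact CharTwo.add_self_eq_zero _
    · show a.h + a.h = 0
      funext i
      exact CharTwo.add_self_eq_zero _
    · show (a.ε * (-1) ^ expo a a) * a.ε * (-1) ^ expo (inv' a) a = 1
      have he : expo (inv' a) a = expo a a := rfl
      rw [he]
      have h1 : a.ε * a.ε = 1 := Int.units_mul_self a.ε
      have h2 : ((-1 : ℤˣ)) ^ expo a a * (-1) ^ expo a a = 1 :=
        Int.units_mul_self _
      calc (a.ε * (-1) ^ expo a a) * a.ε * (-1) ^ expo a a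
          = (a.ε * a.ε) * ((-1) ^ expo a a * (-1) ^ expo a a) := by
            simp only [mul_assoc, mul_comm, mul_left_comm]
        _ = 1 := by rw [h1, h2, one_mul]

lemma mul_def (x y : Ex m) : x * y = mul' x y := rfl
lemma one_def : (1 : Ex m) = one' := rfl

end Ex

/-!
Forgetting the condition on `v`, an element of `Ex_m` is a triple in `(ℤ/2ℤ)^m × (ℤ/2ℤ)^m × {±1}`,
and a vector with vanishing coordinate sum is determined by its last `m - 1` coordinates, so
`|Ex_m| = 2^(m-1) · 2^m · 2 = 4^m`. In characteristic two the square of any element has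
`v = h = 0`, so the sign exponent of its own square vanishes and `x⁴ = (x²)² = (0, 0, ε²) = 1`.
-/

def Fin.sumEqZeroEquiv (G : Type*) [AddCommGroup G] (k : ℕ) :
    {v : Fin (k + 1) → G // ∑ i, v i = 0} ≃ (Fin k → G) where
  toFun v := Fin.tail v.1
  invFun w := ⟨Fin.cons (-∑ i, w i) w, by simp [Fin.sum_cons]⟩
  left_inv v := by
    have hv0 : v.1 0 = -∑ i, Fin.tail v.1 i := by
      have := v.2
      rw [Fin.sum_univ_succ] at this
      exact eq_neg_of_add_eq_zero_left this
    ext1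
    simp only [← hv0, Fin.cons_self_tail]
  right_inv w := Fin.tail_cons _ _

theorem Fin.card_sumEqZero (G : Type*) [AddCommGroup G] [Finite G] (k : ℕ) :
    Nat.card {v : Fin (k + 1) → G // ∑ i, v i = 0} = Nat.card G ^ k := by
  rw [Nat.card_congr (Fin.sumEqZeroEquiv G k), Nat.card_fun, Nat.card_fin]

namespace Ex

variable {m : ℕ}

def equivProd : Ex m ≃ {v : Fin m → ZMod 2 // ∑ i, v i = 0} × (Fin m → ZMod 2) × ℤˣ where
  toFun x := (⟨x.v, x.hv⟩, x.h, x.ε)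
  invFun p := ⟨p.1, p.2.1, p.2.2, p.1.2⟩

theorem card_eq (hm : 0 < m) : Nat.card (Ex m) = 4 ^ m := by
  obtain ⟨k, rfl⟩ : ∃ k, m = k + 1 := Nat.exists_eq_add_one.mpr hm
  rw [Nat.card_congr equivProd, Nat.card_prod, Nat.card_prod, Fin.card_sumEqZero,
    Nat.card_fun, Nat.card_zmod, Nat.card_fin, Nat.card_eq_fintype_card,
    Fintype.card_units_int, show (4 : ℕ) = 2 ^ 2 by norm_num, ← pow_mul]
  ring

theorem mul_self_v (x : Ex m) : (x * x).v = 0 :=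
  funext fun _ => CharTwo.add_self_eq_zero _

theorem mul_self_h (x : Ex m) : (x * x).h = 0 :=
  funext fun _ => CharTwo.add_self_eq_zero _

theorem mul_self_eq_one_of_v_eq_zero_of_h_eq_zero {y : Ex m} (hv : y.v = 0) (hh : y.h = 0) :
    y * y = 1 := by
  ext1 <;> simp [mul_def, one_def, mul', one', expo, hv, hh, Int.units_mul_self]

theorem pow_four_eq_one (x : Ex m) : x ^ 4 = 1 := by
  rw [show 4 = 2 * 2 from rfl, pow_mul, sq, sq]
  exact mul_self_eq_one_of_v_eq_zero_of_h_eq_zero (mul_self_v x) (mul_self_h x)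

end Ex

open Ex in
/-- For every positive integer `m`, `Ex_m` with the given
multiplication is a group of order `4^m` with identity `(0,0,+1)`, and every
element `x` satisfies `x⁴ = (0,0,+1)`. -/
theorem ex_is_group_card_pow_four (m : ℕ) (hm : 0 < m) :
    (∀ x y z : Ex m, mul' (mul' x y) z = mul' x (mul' y z)) ∧
    (∀ x : Ex m, mul' one' x = x ∧ mul' x one' = x) ∧
    (∀ x : Ex m, ∃ y : Ex m, mul' x y = one' ∧ mul' y x = one') ∧
    Nat.card (Ex m) = 4 ^ m ∧
    (∀ x : Ex m, mul' (mul' (mul' x x) x) x = one') := by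
  refine ⟨mul_assoc, fun x => ⟨one_mul x, mul_one x⟩,
    fun x => ⟨x⁻¹, mul_inv_cancel x, inv_mul_cancel x⟩, card_eq hm, fun x => ?_⟩
  have h := pow_four_eq_one x
  rw [pow_succ, pow_succ, pow_succ, pow_one] at h
  exact h
end

section
/- For every positive integer m, the center of the group Ex_m is exactly the four-element set {(0,0,+1), (0,0,−1), (0,𝟙,+1), (0,𝟙,−1)}, where 0 denotes the zero vector and 𝟙 the all-ones vector in (ℤ/2ℤ)^m. -/
/-!
Two elements commute iff their sign exponents agree mod 2. Adding the exponents of `x * y` and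
`y * x`, the strictly triangular cross terms combine into the full double sum `(∑ v) (∑ v')`, which
vanishes on `Ex_m`, and all remaining off-diagonal terms occur twice and cancel mod 2. Hence `x`
and `y` commute iff `∑ i, (v i * (v' i + h' i) + v' i * h i) = 0`. Testing against `(0, e_k, 1)`
forces `v = 0`, and testing against `(e_i + e_j, 0, 1)` forces `h i = h j`.
-/

open Finset

namespace Finset

variable {ι M : Type*} [Fintype ι] [AddCommMonoid M]

theorem sum_diag_eq_sum_ite [DecidableEq ι] (f : ι × ι → M) :
    ∑ i, f (i, i) = ∑ p : ι × ι, if p.1 = p.2 then f p else 0 := by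
  rw [← sum_filter, ← univ_product_univ, ← diag_eq_filter, sum_diag]

theorem sum_filter_le_eq_sum_filter_lt_add_sum_diag [LinearOrder ι] (f : ι × ι → M) :
    ∑ p ∈ univ.filter (fun p : ι × ι => p.1 ≤ p.2), f p =
      ∑ p ∈ univ.filter (fun p : ι × ι => p.1 < p.2), f p + ∑ i, f (i, i) := by
  rw [sum_diag_eq_sum_ite, sum_filter, sum_filter, ← sum_add_distrib]
  refine sum_congr rfl fun p _ => ?_
  split_ifs <;> first | order | simp

theorem sum_filter_lt_add_swap_add_sum_diag [LinearOrder ι] (f : ι → ι → M) :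
    ∑ p ∈ univ.filter (fun p : ι × ι => p.1 < p.2), (f p.1 p.2 + f p.2 p.1) + ∑ i, f i i =
      ∑ i, ∑ j, f i j := by
  have hswap : ∑ p ∈ univ.filter (fun p : ι × ι => p.1 < p.2), f p.2 p.1 =
      ∑ p ∈ univ.filter (fun p : ι × ι => p.2 < p.1), f p.1 p.2 :=
    sum_equiv (Equiv.prodComm _ _) (by simp) (fun _ _ => rfl)
  rw [sum_add_distrib, hswap, sum_diag_eq_sum_ite (fun p => f p.1 p.2),
    ← Fintype.sum_prod_type', sum_filter, sum_filter, ← sum_add_distrib, ← sum_add_distrib]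
  refine sum_congr rfl fun p _ => ?_
  split_ifs <;> first | order | simp

end Finset

theorem eq_zero_or_eq_one_of_forall_eq {ι : Type*} {f : ι → ZMod 2} (hf : ∀ i j, f i = f j) :
    f = 0 ∨ f = 1 := by
  by_cases h : ∀ i, f i = 0
  · exact .inl (funext h)
  · obtain ⟨i, hi⟩ := not_forall.1 h
    exact .inr (funext fun j => (hf j i).trans (Fin.eq_one_of_ne_zero _ hi))

namespace Ex

variable {m : ℕ}

theorem Bf_add_Bf_swap (a b c d : Fin m → ZMod 2) :
    Bf a b c d + Bf c d a b =
      (∑ i, a i) * (∑ i, c i) + ∑ i, (a i * (c i + d i) + c i * b i) := by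
  have hac := sum_filter_lt_add_swap_add_sum_diag fun i j => a i * c j
  rw [← sum_mul_sum] at hac
  unfold Bf
  rw [sum_filter_le_eq_sum_filter_lt_add_sum_diag, sum_filter_le_eq_sum_filter_lt_add_sum_diag,
    ← hac]
  simp only [mul_add, sum_add_distrib, mul_comm (c _) (a _)]
  ring_nf
  reduce_mod_char

theorem χ_injective : Function.Injective χ := by decide

theorem mul'_comm_iff (x y : Ex m) :
    mul' x y = mul' y x ↔ ∑ i, (x.v i * (y.v i + y.h i) + y.v i * x.h i) = 0 := by
  simp only [Ex.ext_iff, mul', add_comm x.v, add_comm x.h, sign_eq, mul_comm x.ε y.ε, true_and,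
    mul_right_inj, χ_injective.eq_iff]
  rw [← CharTwo.add_eq_zero, Bf_add_Bf_swap, x.hv, zero_mul, zero_add]

theorem forall_mul'_comm_iff (x : Ex m) :
    (∀ y, mul' x y = mul' y x) ↔ x.v = 0 ∧ (x.h = 0 ∨ x.h = 1) := by
  simp only [mul'_comm_iff]
  constructor
  · intro H
    have hv : x.v = 0 :=
      funext fun k => by simpa [Pi.single_apply] using H ⟨0, Pi.single k 1, 1, by simp⟩
    refine ⟨hv, eq_zero_or_eq_one_of_forall_eq fun i j => ?_⟩
    have hij := H ⟨Pi.single i 1 + Pi.single j 1, 0, 1, by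
      simp [sum_add_distrib, CharTwo.add_self_eq_zero]⟩
    simpa [hv, Pi.single_apply, add_mul, sum_add_distrib, CharTwo.add_eq_zero] using hij
  · rintro ⟨hv, hh | hh⟩ y <;> simp [hv, hh, y.hv]

theorem eq_central_mk_iff (x : Ex m) :
    (x = ⟨0, 0, 1, by simp⟩ ∨ x = ⟨0, 0, -1, by simp⟩ ∨
        x = ⟨0, (fun _ => 1), 1, by simp⟩ ∨ x = ⟨0, (fun _ => 1), -1, by simp⟩) ↔
      x.v = 0 ∧ (x.h = 0 ∨ x.h = 1) := by
  constructor
  · rintro (rfl | rfl | rfl | rfl) <;> simp [Pi.one_def]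
  · rintro ⟨hv, hh⟩
    rcases hh with hh | hh <;> rcases Int.units_eq_one_or x.ε with hε | hε <;>
      simp [Ex.ext_iff, hv, hh, hε, Pi.one_def]

end Ex

open Ex in
/-- For every positive integer `m`, the centre of the group
`Ex_m` is exactly `{(0,0,+1), (0,0,−1), (0,𝟙,+1), (0,𝟙,−1)}`, where `𝟙` is the
all-ones vector in `(ℤ/2ℤ)^m`. -/
theorem ex_center (m : ℕ) (x : Ex m) :
    (∀ y : Ex m, mul' x y = mul' y x) ↔
      (x = ⟨0, 0, 1, by simp⟩ ∨ x = ⟨0, 0, -1, by simp⟩ ∨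
        x = ⟨0, (fun _ => 1), 1, by simp⟩ ∨ x = ⟨0, (fun _ => 1), -1, by simp⟩) := by
  rw [forall_mul'_comm_iff, eq_central_mk_iff]
end

section
/- For every integer m > 1, the commutator subgroup of the group Ex_m is exactly the two-element set {(0,0,+1), (0,0,−1)}, where 0 denotes the zero vector in (ℤ/2ℤ)^m. -/
open Finset

/-!
Forgetting the sign is a homomorphism onto the abelian group `(ℤ/2ℤ)^m × (ℤ/2ℤ)^m`, so the
commutator subgroup lies in its kernel `{(0,0,±1)}`. Conversely, swapping two factors only
changes the sign, so `⁅x, y⁆ = (0, 0, (-1)^(expo x y + expo y x))`. For `x = (v, 0, 1)` and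
`y = (0, h, 1)` the two exponents are `Σ_{i<j} v_j h_i` and `Σ_{i≤j} v_j h_i`, whose sum is the
dot product `v ⬝ᵥ h` mod 2; taking `v = e₀ + e₁` (this needs `m > 1`) and `h = e₀` gives `-1`.
-/

open scoped commutatorElement

lemma sum_filter_lt_add_sum_filter_le {ι R : Type*} [Fintype ι] [LinearOrder ι] [Ring R]
    [CharP R 2] (f : ι × ι → R) :
    ∑ p ∈ Finset.univ.filter (fun p : ι × ι => p.1 < p.2), f p +
      ∑ p ∈ Finset.univ.filter (fun p : ι × ι => p.1 ≤ p.2), f p = ∑ i, f (i, i) := by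
  rw [Finset.sum_filter, Finset.sum_filter, ← Finset.sum_add_distrib]
  calc ∑ p : ι × ι, ((if p.1 < p.2 then f p else 0) + if p.1 ≤ p.2 then f p else 0)
      = ∑ p : ι × ι, if p.1 = p.2 then f p else 0 := by
        refine Finset.sum_congr rfl fun p _ => ?_
        rcases lt_trichotomy p.1 p.2 with hlt | heq | hgt
        · simp [hlt, hlt.le, hlt.ne, CharTwo.add_self_eq_zero]
        · simp [heq]
        · simp [hgt.not_gt, hgt.not_ge, hgt.ne']
    _ = ∑ i, f (i, i) := by
        rw [Fintype.sum_prod_type]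
        exact Finset.sum_congr rfl fun i _ => by simp [Finset.sum_ite_eq]

namespace Ex

variable {m : ℕ}

lemma Bf_add_Bf_eq_dotProduct (v h : Fin m → ZMod 2) :
    Bf v 0 0 h + Bf 0 h v 0 = v ⬝ᵥ h := by
  simpa [Bf, dotProduct, mul_comm] using
    sum_filter_lt_add_sum_filter_le (fun p : Fin m × Fin m => v p.2 * h p.1)

def ofSign (s : ℤˣ) : Ex m := ⟨0, 0, s, by simp⟩

@[simp]
lemma expo_ofSign_left (s : ℤˣ) (y : Ex m) : expo (ofSign s) y = 0 := by
  simp [expo, ofSign]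

lemma mul_eq_ofSign_mul_mul (x y : Ex m) :
    x * y = ofSign ((-1) ^ (expo x y + expo y x)) * (y * x) := by
  refine Ex.ext (add_comm _ _ |>.trans (zero_add _).symm)
    (add_comm _ _ |>.trans (zero_add _).symm) ?_
  change x.ε * y.ε * (-1) ^ expo x y =
    (-1) ^ (expo x y + expo y x) * (y.ε * x.ε * (-1) ^ expo y x) * (-1) ^ expo (ofSign _) (y * x)
  have hsq : ((-1 : ℤˣ) ^ expo y x) * (-1) ^ expo y x = 1 := Int.units_mul_self _
  rw [expo_ofSign_left, pow_zero, mul_one, pow_add]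
  calc x.ε * y.ε * (-1) ^ expo x y
      = x.ε * y.ε * (-1) ^ expo x y * ((-1) ^ expo y x * (-1) ^ expo y x) := by rw [hsq, mul_one]
    _ = _ := by ac_rfl

lemma commutatorElement_eq_ofSign (x y : Ex m) :
    ⁅x, y⁆ = ofSign ((-1) ^ (expo x y + expo y x)) := by
  rw [commutatorElement_def, mul_eq_ofSign_mul_mul x y]
  group

lemma neg_one_pow_expo_add_expo (x y : Ex m) :
    (-1 : ℤˣ) ^ (expo x y + expo y x) = χ (Bf x.v x.h y.v y.h + Bf y.v y.h x.v x.h) := by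
  rw [pow_add, sign_eq, sign_eq, χ_add]

lemma negOne'_mem_commutator (hm : 1 < m) : (negOne' : Ex m) ∈ commutator (Ex m) := by
  let i₀ : Fin m := ⟨0, by omega⟩
  let i₁ : Fin m := ⟨1, hm⟩
  have hne : i₀ ≠ i₁ := by simp [i₀, i₁, Fin.ext_iff]
  let x : Ex m := ⟨Pi.single i₀ 1 + Pi.single i₁ 1, 0, 1, by
    simp only [Pi.add_apply, Finset.sum_add_distrib, Finset.sum_pi_single', Finset.mem_univ,
      if_true]
    decide⟩
  let y : Ex m := ⟨0, Pi.single i₀ 1, 1, by simp⟩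
  have hdot : (Pi.single i₀ 1 + Pi.single i₁ 1 : Fin m → ZMod 2) ⬝ᵥ Pi.single i₀ 1 = 1 := by
    simp [dotProduct_single, hne.symm]
  have hxy : ⁅x, y⁆ = negOne' := by
    rw [commutatorElement_eq_ofSign, neg_one_pow_expo_add_expo]
    change ofSign (χ (Bf _ 0 0 _ + Bf 0 _ _ 0)) = _
    rw [Bf_add_Bf_eq_dotProduct, hdot]
    rfl
  exact hxy ▸ Subgroup.commutator_mem_commutator (Subgroup.mem_top x) (Subgroup.mem_top y)

def forgetSign : Ex m →* Multiplicative ((Fin m → ZMod 2) × (Fin m → ZMod 2)) where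
  toFun z := Multiplicative.ofAdd (z.v, z.h)
  map_one' := rfl
  map_mul' _ _ := rfl

lemma eq_one'_or_eq_negOne'_of_mem_ker {g : Ex m} (hg : g ∈ (forgetSign : Ex m →* _).ker) :
    g = one' ∨ g = negOne' := by
  obtain ⟨hv, hh⟩ := Prod.ext_iff.mp (Multiplicative.ofAdd.injective (MonoidHom.mem_ker.mp hg))
  rcases Int.units_eq_one_or g.ε with hε | hε
  · exact Or.inl (Ex.ext hv hh hε)
  · exact Or.inr (Ex.ext hv hh hε)

end Ex

open Ex in
/-- For every integer `m > 1`, the commutator subgroup of the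
group `Ex_m` is exactly the two-element set `{(0,0,+1), (0,0,−1)}`. -/
theorem ex_commutator (m : ℕ) (hm : 1 < m) :
    (commutator (Ex m) : Set (Ex m)) = {Ex.one', Ex.negOne'} := by
  refine Set.Subset.antisymm (fun g hg => ?_) ?_
  · exact eq_one'_or_eq_negOne'_of_mem_ker (Abelianization.commutator_subset_ker forgetSign hg)
  · rintro g (rfl | rfl)
    · exact one_mem (commutator (Ex m))
    · exact negOne'_mem_commutator hm
end

section
/- For every positive integer m, the set C_m of m-row Cauchon diagrams, regarded as the set of words over the alphabet Σ_m whose concatenation yields a Cauchon diagram, is a regular language: there is a deterministic finite automaton over Σ_m accepting exactly the words corresponding to Cauchon diagrams. -/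
/-- The alphabet `Σ_m` of `m × 1` columns. -/
abbrev Col (m : ℕ) := Fin m → Bool

/-- The `m × n` diagram corresponding to a word of `n` columns (concatenated
from left to right). -/
def toDiagram {m : ℕ} (w : List (Col m)) : Diagram m w.length :=
  fun i j => (w.get j) i

/-- A diagram is Cauchon if for every black square, either all squares to its
left in its row are black, or all squares above it in its column are black. -/
def IsCauchon {m n : ℕ} (D : Diagram m n) : Prop :=
  ∀ (i : Fin m) (j : Fin n), D i j = false →
    (∀ j' : Fin n, j' < j → D i j' = false) ∨
    (∀ i' : Fin m, i' < i → D i' j = false)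

/-!
Reading a diagram column by column, whether the next column may be appended depends only on
which rows are entirely black so far. So an automaton whose states are the sets of all-black
rows, plus a rejecting sink, recognises the Cauchon diagrams.
-/

namespace Cauchon

variable {m : ℕ}

def blackRows (w : List (Col m)) (i : Fin m) : Bool :=
  decide (∀ c ∈ w, c i = false)

/-- Column `c` may follow a prefix whose entirely black rows are marked by `s`. -/
def Admissible (s : Fin m → Bool) (c : Col m) : Prop :=
  ∀ i, c i = false → s i = true ∨ ∀ i' < i, c i' = false

instance (s : Fin m → Bool) (c : Col m) : Decidable (Admissible s c) := by
  unfold Admissible; infer_instance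

def IsCauchonWord (w : List (Col m)) : Prop :=
  ∀ (j : ℕ) (hj : j < w.length), Admissible (blackRows (w.take j)) w[j]

instance (w : List (Col m)) : Decidable (IsCauchonWord w) := by
  unfold IsCauchonWord; infer_instance

theorem isCauchon_toDiagram_iff (w : List (Col m)) :
    IsCauchon (toDiagram w) ↔ IsCauchonWord w := by
  simp only [IsCauchonWord, Admissible, blackRows, decide_eq_true_eq, List.forall_mem_iff_getElem,
    List.getElem_take, List.length_take]
  constructor
  · intro h j hj i hij
    rcases h i ⟨j, hj⟩ hij with hrow | hcol
    · exact .inl fun j' hj' => hrow ⟨j', by omega⟩ (Fin.mk_lt_mk.mpr (by omega))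
    · exact .inr hcol
  · intro h i j hij
    rcases h j j.2 i hij with hrow | hcol
    · exact .inl fun j' hj' => hrow j' (by omega)
    · exact .inr hcol

theorem isCauchonWord_append_singleton (w : List (Col m)) (c : Col m) :
    IsCauchonWord (w ++ [c]) ↔ IsCauchonWord w ∧ Admissible (blackRows w) c := by
  constructor
  · intro h
    refine ⟨fun j hj => ?_, by simpa using h w.length (by simp)⟩
    have := h j (by simp; omega)
    rwa [List.getElem_append_left hj, List.take_append_of_le_length hj.le] at this
  · rintro ⟨hw, hc⟩ j hj
    rcases Nat.lt_or_eq_of_le (Nat.lt_succ_iff.mp (by simpa using hj)) with hj | rfl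
    · simpa [List.getElem_append_left hj, List.take_append_of_le_length hj.le] using hw j hj
    · simpa using hc

theorem blackRows_append_singleton (w : List (Col m)) (c : Col m) :
    blackRows (w ++ [c]) = fun i => blackRows w i && !c i := by
  funext i
  simp only [blackRows, List.forall_mem_append, List.forall_mem_singleton, Bool.decide_and,
    Bool.decide_eq_false]

/-- The state `none` is a rejecting sink; `some s` records the entirely black rows `s`. -/
def dfa (m : ℕ) : DFA (Col m) (Option (Fin m → Bool)) where
  step s c := s.bind fun s => if Admissible s c then some fun i => s i && !c i else none
  start := some (blackRows [])
  accept := {s | s.isSome}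

theorem dfa_eval (w : List (Col m)) :
    (dfa m).eval w = if IsCauchonWord w then some (blackRows w) else none := by
  induction w using List.reverseRecOn with
  | nil => simp [DFA.eval_nil, dfa, IsCauchonWord]
  | append_singleton w c ih =>
    rw [DFA.eval_append_singleton, ih, blackRows_append_singleton]
    simp only [isCauchonWord_append_singleton]
    by_cases hw : IsCauchonWord w
    · by_cases hc : Admissible (blackRows w) c <;> simp [dfa, hw, hc]
    · simp [dfa, hw]

theorem accepts_dfa : (dfa m).accepts = {w | IsCauchon (toDiagram w)} := by
  ext w
  change _ ↔ IsCauchon (toDiagram w)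
  rw [DFA.mem_accepts, dfa_eval, isCauchon_toDiagram_iff]
  by_cases hw : IsCauchonWord w <;> simp [dfa, hw]

end Cauchon

theorem cauchon_regular_general (m : ℕ) :
    Language.IsRegular ({ w : List (Col m) | IsCauchon (toDiagram w) } :
      Language (Col m)) :=
  ⟨_, inferInstance, Cauchon.dfa m, Cauchon.accepts_dfa⟩

/-- For every positive integer `m`, the set of words over the
alphabet `Σ_m` of `m × 1` columns whose concatenation is a Cauchon diagram is a
regular language (accepted by some finite deterministic automaton). -/
theorem cauchon_regular (m : ℕ) (hm : 0 < m) :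
    Language.IsRegular ({ w : List (Col m) | IsCauchon (toDiagram w) } :
      Language (Col m)) :=
  cauchon_regular_general m
end

section
/- Fix a positive integer m. The set of words over Σ_m corresponding to m-row Cauchon diagrams C with det(M(C)) ≠ 0 (the primitive Cauchon diagrams) is a regular language over Σ_m. -/
open Finset

/-- The entry of the skew-adjacency matrix attached to a pair of squares:
`+1` if `p` is strictly to the left of `q` in the same row, or strictly above `q`
in the same column; `-1` in the two opposite situations; `0` otherwise. -/
def adjEntry {m n : ℕ} (p q : Fin m × Fin n) : ℤ :=
  if (p.1 = q.1 ∧ p.2 < q.2) ∨ (p.2 = q.2 ∧ p.1 < q.1) then 1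
  else if (p.1 = q.1 ∧ q.2 < p.2) ∨ (p.2 = q.2 ∧ q.1 < p.1) then -1
  else 0

/-- The skew-adjacency matrix `M(D)` of a diagram `D`, with rows and columns
indexed by the white squares of `D`. -/
def skewAdj {m n : ℕ} (D : Diagram m n) :
    Matrix {p : Fin m × Fin n // p ∈ whites D} {p : Fin m × Fin n // p ∈ whites D} ℤ :=
  fun p q => adjEntry p.1 q.1

/-!
A kernel vector `x` of `M(C)` is determined, column by column, by its row sums `r`. Let `u i` be
the sum of `x` over row `i` strictly left of the current column `j`. The kernel equation at a white
square `(i, j)` reads `u i + (sum of column j down to row i) = (r i + c) / 2`, with `c` the sum of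
column `j`. At the bottom white square of the column this forces `c`, and then every partial column
sum, so the new `u` is determined by `r` and the old `u`. Starting from `u i = (r i - r i) / 2`,
each `u i` stays a form `(r i ± r b) / 2`; the pairs `(b, ±)` are a finite state updated column by column, and `M(C)` is
singular iff some `r ≠ 0` has `u i = r i` for all `i` after the last column. The Cauchon condition
only needs to remember which rows already contain a white square.
-/

theorem Language.isRegular_setOf_foldl {α σ : Type*} [Fintype σ] (step : σ → α → σ) (s : σ)
    (P : σ → Prop) : Language.IsRegular ({w | P (w.foldl step s)} : Language α) :=
  Language.isRegular_iff.mpr ⟨σ, inferInstance, ⟨step, s, {t | P t}⟩, rfl⟩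

open Matrix in
theorem Matrix.det_submatrix_val_eq_zero_iff {ι K : Type*} [Fintype ι] [DecidableEq ι] [Field K]
    (A : Matrix ι ι K) (s : Finset ι) :
    (A.submatrix ((↑) : s → ι) (↑)).det = 0 ↔
      ∃ x : ι → K, x ≠ 0 ∧ (∀ i ∉ s, x i = 0) ∧ ∀ i ∈ s, ∑ j, A i j * x j = 0 := by
  rw [← Matrix.exists_mulVec_eq_zero_iff]
  have hsum : ∀ x : ι → K, (∀ i ∉ s, x i = 0) → ∀ i : s,
      (A.submatrix ((↑) : s → ι) (↑) *ᵥ fun j : s => x j) i = ∑ j, A i j * x j :=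
    fun x hx i => by
      simp only [mulVec, dotProduct, submatrix_apply]
      rw [Finset.sum_coe_sort s (fun j => A i j * x j)]
      exact Finset.sum_subset (Finset.subset_univ s) fun j _ hj => by rw [hx j hj, mul_zero]
  constructor
  · rintro ⟨v, hv, hAv⟩
    set x : ι → K := fun i => if h : i ∈ s then v ⟨i, h⟩ else 0
    have hx : ∀ i ∉ s, x i = 0 := fun i hi => dif_neg hi
    have hvx : v = fun j : s => x j := funext fun j => by simp [x]
    refine ⟨x, fun h => hv (funext fun i => ?_), hx, fun i hi => ?_⟩
    · simpa [x] using congrFun h i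
    · rw [← hsum x hx ⟨i, hi⟩, ← hvx, hAv, Pi.zero_apply]
  · rintro ⟨x, hx0, hx, hAx⟩
    refine ⟨fun i => x i, fun h => hx0 (funext fun i => ?_), funext fun i => ?_⟩
    · by_cases hi : i ∈ s
      · exact congrFun h ⟨i, hi⟩
      · exact hx i hi
    · rw [hsum x hx, hAx i i.2, Pi.zero_apply]

section PrefixSum

variable {M : Type*} {n : ℕ}

def prefixSum [AddCommMonoid M] (f : Fin n → M) (k : ℕ) : M := ∑ i with i.val < k, f i

@[simp]
theorem prefixSum_zero [AddCommMonoid M] (f : Fin n → M) : prefixSum f 0 = 0 := by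
  simp [prefixSum]

theorem prefixSum_succ [AddCommMonoid M] (f : Fin n → M) (i : Fin n) :
    prefixSum f (i + 1 : ℕ) = prefixSum f i + f i := by
  have : univ.filter (fun j : Fin n => j.val < i + 1) =
      insert i (univ.filter fun j : Fin n => j.val < i) := by
    ext j; simp only [mem_filter, mem_univ, true_and, mem_insert, Fin.ext_iff]; omega
  unfold prefixSum
  rw [this, sum_insert (by simp), add_comm]

theorem prefixSum_eq_sum [AddCommMonoid M] {f : Fin n → M} {k : ℕ}
    (hf : ∀ i : Fin n, k ≤ i.val → f i = 0) : prefixSum f k = ∑ i, f i := by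
  refine sum_subset (subset_univ _) fun i _ hi => hf i ?_
  simpa using hi

theorem prefixSum_of_le [AddCommMonoid M] (f : Fin n → M) {k : ℕ} (hk : n ≤ k) :
    prefixSum f k = ∑ i, f i :=
  prefixSum_eq_sum fun i hi => absurd i.2 (by omega)

theorem prefixSum_sub_telescope [AddCommGroup M] (g : ℕ → M) {k : ℕ} (hk : k ≤ n) :
    prefixSum (fun i : Fin n => g (i + 1) - g i) k = g k - g 0 := by
  induction k with
  | zero => simp
  | succ k ih =>
    rw [show k = (⟨k, hk⟩ : Fin n).val from rfl, prefixSum_succ, ih (by omega)]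
    abel

end PrefixSum

namespace CauchonDiagram

section Scan

variable {m n : ℕ} {σ : Type*} (step : σ → Col m → σ) (s : σ)

def scanColumns (D : Diagram m n) : ℕ → σ
  | 0 => s
  | j + 1 => if h : j < n then step (scanColumns D j) (D · ⟨j, h⟩) else scanColumns D j

theorem scanColumns_succ (D : Diagram m n) (j : Fin n) :
    scanColumns step s D (j + 1 : ℕ) = step (scanColumns step s D j) (D · j) := by
  simp [scanColumns, j.2]

theorem scanColumns_toDiagram (w : List (Col m)) :
    scanColumns step s (toDiagram w) w.length = w.foldl step s := by
  suffices ∀ j ≤ w.length, scanColumns step s (toDiagram w) j = (w.take j).foldl step s by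
    simpa using this _ le_rfl
  intro j hj
  induction j with
  | zero => rfl
  | succ j ih =>
    rw [show j = (⟨j, hj⟩ : Fin w.length).val from rfl, scanColumns_succ, ih (by omega),
      List.take_add_one, List.getElem?_eq_getElem hj, Option.toList_some, List.foldl_append]
    rfl

theorem isRegular_of_scanColumns [Fintype σ] (P : ∀ n, Diagram m n → Prop) (Q : σ → Prop)
    (hPQ : ∀ n (D : Diagram m n), P n D ↔ Q (scanColumns step s D n)) :
    Language.IsRegular ({w | P w.length (toDiagram w)} : Language (Col m)) := by
  have hL : ({w | P w.length (toDiagram w)} : Language (Col m)) = {w | Q (w.foldl step s)} :=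
    Set.ext fun w => (hPQ _ _).trans (by rw [scanColumns_toDiagram]; rfl)
  rw [hL]
  exact Language.isRegular_setOf_foldl step s Q

end Scan

section Cauchon

variable {m n : ℕ}

def IsCauchonColumn (seen : Fin m → Bool) (col : Col m) : Prop :=
  ∀ i, col i = false → seen i = true → ∀ i' < i, col i' = false

instance (seen : Fin m → Bool) (col : Col m) : Decidable (IsCauchonColumn seen col) :=
  by unfold IsCauchonColumn; infer_instance

def hasWhiteBefore (D : Diagram m n) (j : ℕ) (i : Fin m) : Bool :=
  decide (∃ j' : Fin n, j'.val < j ∧ D i j' = true)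

theorem isCauchon_iff_isCauchonColumn (D : Diagram m n) :
    IsCauchon D ↔ ∀ j : Fin n, IsCauchonColumn (hasWhiteBefore D j) (D · j) := by
  simp only [IsCauchon, IsCauchonColumn, hasWhiteBefore, decide_eq_true_eq]
  rw [forall_comm]
  refine forall₂_congr fun j i => imp_congr_right fun _ => ?_
  simp only [or_iff_not_imp_left, not_forall, Bool.not_eq_false, exists_prop, Fin.lt_def]

def cauchonStep (s : (Fin m → Bool) × Bool) (col : Col m) : (Fin m → Bool) × Bool :=
  (fun i => s.1 i || col i, s.2 && decide (IsCauchonColumn s.1 col))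

theorem scanColumns_cauchonStep (D : Diagram m n) {j : ℕ} (hj : j ≤ n) :
    scanColumns cauchonStep (fun _ => false, true) D j =
      (hasWhiteBefore D j,
        decide (∀ j' : Fin n, j'.val < j → IsCauchonColumn (hasWhiteBefore D j') (D · j'))) := by
  induction j with
  | zero =>
    simp only [scanColumns, Prod.mk.injEq]
    exact ⟨funext fun i => by simp [hasWhiteBefore], by simp⟩
  | succ j ih =>
    set jj : Fin n := ⟨j, hj⟩
    have hlt : ∀ j' : Fin n, j'.val < jj + 1 ↔ j'.val < jj ∨ j' = jj := fun j' => by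
      rw [Fin.ext_iff]; omega
    rw [show j = jj.val from rfl, scanColumns_succ, ih (by omega), cauchonStep, Prod.mk.injEq]
    refine ⟨funext fun i => ?_, ?_⟩
    · simp only [hasWhiteBefore, hlt, or_and_right, exists_or, exists_eq_left, Bool.decide_or,
        Bool.decide_eq_true]
      rfl
    · simp only [hlt, or_imp, forall_and, forall_eq, Bool.decide_and]
      rfl

theorem isCauchon_iff_scanColumns (D : Diagram m n) :
    IsCauchon D ↔ (scanColumns cauchonStep (fun _ => false, true) D n).2 = true := by
  simp [scanColumns_cauchonStep D le_rfl, isCauchon_iff_isCauchonColumn]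

end Cauchon

section Column

variable {m : ℕ} (col : Col m)

def lastWhiteAbove : ℕ → Option (Fin m)
  | 0 => none
  | k + 1 =>
    if h : k < m then (if col ⟨k, h⟩ then some ⟨k, h⟩ else lastWhiteAbove k)
    else lastWhiteAbove k

theorem lastWhiteAbove_succ (i : Fin m) :
    lastWhiteAbove col (i + 1 : ℕ) = if col i then some i else lastWhiteAbove col i := by
  simp [lastWhiteAbove, i.2]

theorem lastWhiteAbove_eq_none_iff {k : ℕ} :
    lastWhiteAbove col k = none ↔ ∀ i : Fin m, i.val < k → col i = false := by
  induction k with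
  | zero => simp [lastWhiteAbove]
  | succ k ih =>
    by_cases hk : k < m
    · rw [show k = (⟨k, hk⟩ : Fin m).val from rfl, lastWhiteAbove_succ]
      by_cases hw : col ⟨k, hk⟩
      · simp only [hw, if_true, reduceCtorEq, false_iff, not_forall]
        exact ⟨⟨k, hk⟩, by simp, by simp [hw]⟩
      · simp only [hw, ih, Bool.false_eq_true, if_false]
        refine ⟨fun h i hi => ?_, fun h i hi => h i (by omega)⟩
        rcases Nat.lt_succ_iff_lt_or_eq.mp hi with hi | hi
        · exact h i hi
        · simpa [show i = ⟨k, hk⟩ from Fin.ext hi] using hw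
    · simp only [lastWhiteAbove, hk, dite_false, ih]
      exact ⟨fun h i _ => h i (by omega), fun h i hi => h i (by omega)⟩

theorem lastWhiteAbove_eq_some {k : ℕ} {p : Fin m} (h : lastWhiteAbove col k = some p) :
    col p = true ∧ p.val < k ∧ ∀ i : Fin m, p < i → i.val < k → col i = false := by
  induction k with
  | zero => simp [lastWhiteAbove] at h
  | succ k ih =>
    by_cases hk : k < m
    · rw [show k = (⟨k, hk⟩ : Fin m).val from rfl, lastWhiteAbove_succ] at h
      by_cases hw : col ⟨k, hk⟩
      · simp only [hw, if_true, Option.some.injEq] at h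
        subst h
        exact ⟨hw, by simp, fun i hi hik => absurd hik (by simp [Fin.lt_def] at hi ⊢; omega)⟩
      · simp only [hw, Bool.false_eq_true, if_false] at h
        obtain ⟨hp, hpk, hafter⟩ := ih h
        refine ⟨hp, by omega, fun i hi hik => ?_⟩
        rcases Nat.lt_succ_iff_lt_or_eq.mp hik with hik | hik
        · exact hafter i hi hik
        · simpa [show i = ⟨k, hk⟩ from Fin.ext hik] using hw
    · simp only [lastWhiteAbove, hk, dite_false] at h
      obtain ⟨hp, hpk, hafter⟩ := ih h
      exact ⟨hp, by omega, fun i hi _ => hafter i hi (by omega)⟩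

theorem exists_lastWhiteAbove_eq_some {i : Fin m} (hi : col i = true) {k : ℕ} (hik : i.val < k) :
    ∃ b, lastWhiteAbove col k = some b :=
  Option.ne_none_iff_exists'.mp fun h => by
    simp [(lastWhiteAbove_eq_none_iff col).mp h i hik] at hi

variable (r u : Fin m → ℚ)

-- At the bottom white square `b` the partial column sum is the whole sum `c`, so its kernel
-- equation forces `c = r b - 2 * u b`; the equation at the last white square above row `k` then
-- forces the partial sum above `k`.
def colTotal : ℚ := (lastWhiteAbove col m).elim 0 fun b => r b - 2 * u b

def colPrefix (k : ℕ) : ℚ :=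
  (lastWhiteAbove col k).elim 0 fun p => (r p + colTotal col r u) / 2 - u p

-- The kernel equations at the white squares of a column `y`, where `r` are the row sums and `u`
-- the row sums strictly left of the column.
def IsColumnSolution (y : Fin m → ℚ) : Prop :=
  (∀ i, col i = false → y i = 0) ∧
    ∀ i, col i = true → u i + prefixSum y (i + 1 : ℕ) = (r i + ∑ i', y i') / 2

@[simp]
theorem colPrefix_zero : colPrefix col r u 0 = 0 := rfl

theorem colPrefix_succ (i : Fin m) : colPrefix col r u (i + 1 : ℕ) =
    if col i then (r i + colTotal col r u) / 2 - u i else colPrefix col r u i := by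
  by_cases hi : col i <;> simp [colPrefix, lastWhiteAbove_succ, hi]

theorem colPrefix_eq_colTotal {i : Fin m} (hi : col i = true) :
    colPrefix col r u m = colTotal col r u := by
  obtain ⟨b, hb⟩ := exists_lastWhiteAbove_eq_some col hi i.2
  simp only [colPrefix, colTotal, hb, Option.elim_some]
  ring

variable {col r u}

theorem IsColumnSolution.sum_eq_colTotal {y : Fin m → ℚ} (hy : IsColumnSolution col r u y) :
    ∑ i, y i = colTotal col r u := by
  rcases hb : lastWhiteAbove col m with _ | b
  · have hblack := (lastWhiteAbove_eq_none_iff col).mp hb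
    simp [colTotal, hb, hy.1 _ (hblack _ (Fin.is_lt _))]
  · obtain ⟨hbw, -, hafter⟩ := lastWhiteAbove_eq_some col hb
    have hlast : prefixSum y (b + 1 : ℕ) = ∑ i, y i :=
      prefixSum_eq_sum fun i hi => hy.1 i (hafter i (by rw [Fin.lt_def]; omega) i.2)
    have := hy.2 b hbw
    simp only [colTotal, hb, Option.elim_some]
    linarith

theorem IsColumnSolution.prefixSum_eq {y : Fin m → ℚ} (hy : IsColumnSolution col r u y) {k : ℕ}
    (hk : k ≤ m) : prefixSum y k = colPrefix col r u k := by
  induction k with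
  | zero => simp
  | succ k ih =>
    set i : Fin m := ⟨k, hk⟩
    rw [show k = i.val from rfl, colPrefix_succ]
    by_cases hi : col i
    · have := hy.2 i hi
      rw [if_pos hi, ← hy.sum_eq_colTotal]
      linarith
    · rw [prefixSum_succ, hy.1 i (by simpa using hi), if_neg hi, ih (by omega), add_zero]

theorem isColumnSolution_iff {y : Fin m → ℚ} : IsColumnSolution col r u y ↔
    y = fun i : Fin m => colPrefix col r u (i + 1 : ℕ) - colPrefix col r u i := by
  constructor
  · intro hy
    funext i
    rw [← hy.prefixSum_eq i.2, ← hy.prefixSum_eq i.2.le, prefixSum_succ]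
    ring
  · rintro rfl
    have hpre : ∀ k ≤ m, prefixSum (fun i : Fin m => colPrefix col r u (i + 1 : ℕ) -
        colPrefix col r u i) k = colPrefix col r u k := fun k hk => by
      rw [prefixSum_sub_telescope (colPrefix col r u) hk, colPrefix_zero, sub_zero]
    refine ⟨fun i hi => by simp [colPrefix_succ, hi], fun i hi => ?_⟩
    rw [← prefixSum_of_le _ le_rfl, hpre _ le_rfl, hpre _ i.2, colPrefix_eq_colTotal col r u hi,
      colPrefix_succ, if_pos hi]
    ring

end Column

section Forms

variable {m : ℕ}

-- `e = (b, true)` encodes the form `(r i + r b) / 2` in the row sums `r`, and `(b, false)` the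
-- form `(r i - r b) / 2`.
def formVal (e : Fin m × Bool) (r : Fin m → ℚ) (i : Fin m) : ℚ :=
  (r i + if e.2 then r e.1 else -r e.1) / 2

-- A white square inherits the form of the white square above it, the topmost one the negated
-- form of the bottom one.
def stepForms (B : Fin m → Fin m × Bool) (col : Col m) (i : Fin m) : Fin m × Bool :=
  if col i then
    (lastWhiteAbove col i).elim ((lastWhiteAbove col m).elim (B i) fun b => ((B b).1, !(B b).2)) B
  else B i

theorem formVal_stepForms (B : Fin m → Fin m × Bool) (col : Col m) (r : Fin m → ℚ) (i : Fin m) :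
    formVal (stepForms B col i) r i = formVal (B i) r i +
      colPrefix col r (fun i => formVal (B i) r i) (i + 1 : ℕ) -
      colPrefix col r (fun i => formVal (B i) r i) i := by
  set u := fun i => formVal (B i) r i
  rw [colPrefix_succ]
  by_cases hi : col i
  · rw [if_pos hi]
    rcases hp : lastWhiteAbove col i with _ | p
    · obtain ⟨b, hb⟩ := exists_lastWhiteAbove_eq_some col hi i.2
      simp only [stepForms, hi, if_true, hp, hb, Option.elim_none, Option.elim_some, colPrefix,
        colTotal, u, formVal]
      cases (B b).2 <;> simp <;> ring
    · simp only [stepForms, hi, if_true, hp, Option.elim_some, colPrefix, u, formVal]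
      ring
  · simp [stepForms, hi]

end Forms

section Kernel

variable {m n : ℕ}

def IsKernelVec (D : Diagram m n) (x : Fin m × Fin n → ℚ) : Prop :=
  (∀ p, D p.1 p.2 = false → x p = 0) ∧ ∀ p, D p.1 p.2 = true → ∑ q, (adjEntry p q : ℚ) * x q = 0

theorem det_skewAdj_eq_zero_iff (D : Diagram m n) :
    (skewAdj D).det = 0 ↔ ∃ x, x ≠ 0 ∧ IsKernelVec D x := by
  rw [← Int.cast_eq_zero (α := ℚ), ← eq_intCast (Int.castRingHom ℚ), RingHom.map_det]
  exact (Matrix.det_submatrix_val_eq_zero_iff (Matrix.of fun p q => (adjEntry p q : ℚ))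
    (whites D)).trans (by simp [IsKernelVec, whites])

theorem adjEntry_mul (i i' : Fin m) (j j' : Fin n) (a : ℚ) :
    (adjEntry (i, j) (i', j') : ℚ) * a =
      (if i' = i then a - (if j'.val < j + 1 then a else 0) - (if j'.val < j then a else 0)
        else 0) +
      (if j' = j then a - (if i'.val < i + 1 then a else 0) - (if i'.val < i then a else 0)
        else 0) := by
  simp only [adjEntry, Fin.ext_iff, Fin.lt_def]
  split_ifs <;> first | (exfalso; omega) | push_cast; ring

def rowSums (x : Fin m × Fin n → ℚ) (i : Fin m) : ℚ := ∑ j, x (i, j)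

def rowPrefix (x : Fin m × Fin n → ℚ) (j : ℕ) (i : Fin m) : ℚ := prefixSum (fun j' => x (i, j')) j

theorem sum_adjEntry_mul (x : Fin m × Fin n → ℚ) (i : Fin m) (j : Fin n) :
    ∑ q, (adjEntry (i, j) q : ℚ) * x q = rowSums x i + ∑ i', x (i', j) -
      2 * (rowPrefix x j i + prefixSum (fun i' => x (i', j)) (i + 1 : ℕ)) := by
  have hrow := prefixSum_succ (fun j' => x (i, j')) j
  have hcol := prefixSum_succ (fun i' => x (i', j)) i
  simp only [Fintype.sum_prod_type, adjEntry_mul, sum_add_distrib, sum_ite_eq', mem_univ, if_true,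
    prefixSum, sum_filter, sum_sub_distrib] at hrow hcol ⊢
  rw [sum_comm]
  simp only [sum_ite_eq', mem_univ, if_true, sum_sub_distrib, rowSums, rowPrefix, prefixSum,
    sum_filter]
  linarith

theorem isKernelVec_iff (D : Diagram m n) (x : Fin m × Fin n → ℚ) :
    IsKernelVec D x ↔
      ∀ j : Fin n, IsColumnSolution (D · j) (rowSums x) (rowPrefix x j) (fun i => x (i, j)) := by
  constructor
  · intro hx j
    refine ⟨fun i hi => hx.1 (i, j) hi, fun i hi => ?_⟩
    have := hx.2 (i, j) hi
    rw [sum_adjEntry_mul] at this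
    linarith
  · intro h
    refine ⟨fun p hp => (h p.2).1 p.1 hp, fun p hp => ?_⟩
    have := (h p.2).2 p.1 hp
    rw [sum_adjEntry_mul]
    linarith

end Kernel

section Primitive

variable {m n : ℕ}

def formStates (D : Diagram m n) : ℕ → Fin m → Fin m × Bool :=
  scanColumns stepForms (fun i => (i, false)) D

@[simp]
theorem formVal_formStates_zero (D : Diagram m n) (r : Fin m → ℚ) (i : Fin m) :
    formVal (formStates D 0 i) r i = 0 := by
  simp [formStates, scanColumns, formVal]

theorem formStates_succ (D : Diagram m n) (j : Fin n) :
    formStates D (j + 1 : ℕ) = stepForms (formStates D j) (D · j) :=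
  scanColumns_succ _ _ D j

theorem IsKernelVec.rowPrefix_eq {D : Diagram m n} {x : Fin m × Fin n → ℚ} (hx : IsKernelVec D x)
    {j : ℕ} (hj : j ≤ n) : rowPrefix x j = fun i => formVal (formStates D j i) (rowSums x) i := by
  induction j with
  | zero => funext i; simp [rowPrefix]
  | succ j ih =>
    set jj : Fin n := ⟨j, hj⟩
    have hcol := isColumnSolution_iff.mp ((isKernelVec_iff D x).mp hx jj)
    funext i
    rw [show j = jj.val from rfl, rowPrefix, prefixSum_succ, ← rowPrefix, formStates_succ,
      formVal_stepForms, congrFun hcol i, ih (by omega)]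
    ring

theorem IsKernelVec.eq_zero_of_rowSums_eq_zero {D : Diagram m n} {x : Fin m × Fin n → ℚ}
    (hx : IsKernelVec D x) (hr : rowSums x = 0) : x = 0 := by
  funext p
  have hsucc := congrFun (hx.rowPrefix_eq (j := p.2 + 1) p.2.2) p.1
  have hself := congrFun (hx.rowPrefix_eq p.2.2.le) p.1
  simp only [rowPrefix, prefixSum_succ, hr, formVal, Pi.zero_apply] at hsucc hself
  simpa [hself] using hsucc

def kernelVecOf (D : Diagram m n) (r : Fin m → ℚ) (p : Fin m × Fin n) : ℚ :=
  formVal (formStates D (p.2 + 1) p.1) r p.1 - formVal (formStates D p.2 p.1) r p.1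

theorem rowPrefix_kernelVecOf (D : Diagram m n) (r : Fin m → ℚ) {j : ℕ} (hj : j ≤ n) :
    rowPrefix (kernelVecOf D r) j = fun i => formVal (formStates D j i) r i := by
  funext i
  exact (prefixSum_sub_telescope (fun j => formVal (formStates D j i) r i) hj).trans
    (by rw [formVal_formStates_zero, sub_zero])

theorem rowSums_kernelVecOf {D : Diagram m n} {r : Fin m → ℚ}
    (hr : ∀ i, formVal (formStates D n i) r i = r i) : rowSums (kernelVecOf D r) = r :=
  funext fun i => by
    rw [rowSums, ← prefixSum_of_le _ le_rfl, ← rowPrefix, rowPrefix_kernelVecOf D r le_rfl]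
    exact hr i

theorem isKernelVec_kernelVecOf {D : Diagram m n} {r : Fin m → ℚ}
    (hr : ∀ i, formVal (formStates D n i) r i = r i) : IsKernelVec D (kernelVecOf D r) := by
  refine (isKernelVec_iff D _).mpr fun j => ?_
  rw [isColumnSolution_iff, rowSums_kernelVecOf hr, rowPrefix_kernelVecOf D r j.2.le]
  funext i
  simp only [kernelVecOf, formStates_succ, formVal_stepForms]
  ring

theorem exists_isKernelVec_iff (D : Diagram m n) : (∃ x, x ≠ 0 ∧ IsKernelVec D x) ↔
    ∃ r : Fin m → ℚ, r ≠ 0 ∧ ∀ i, formVal (formStates D n i) r i = r i := by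
  constructor
  · rintro ⟨x, hx0, hx⟩
    refine ⟨rowSums x, mt hx.eq_zero_of_rowSums_eq_zero hx0, fun i => ?_⟩
    rw [← congrFun (hx.rowPrefix_eq le_rfl) i, rowPrefix, prefixSum_of_le _ le_rfl, rowSums]
  · rintro ⟨r, hr0, hr⟩
    refine ⟨kernelVecOf D r, fun hx0 => hr0 ?_, isKernelVec_kernelVecOf hr⟩
    rw [← rowSums_kernelVecOf hr, hx0]
    exact funext fun i => sum_eq_zero fun _ _ => rfl

def IsNondegenerate (B : Fin m → Fin m × Bool) : Prop :=
  ∀ r : Fin m → ℚ, (∀ i, formVal (B i) r i = r i) → r = 0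

theorem det_skewAdj_ne_zero_iff (D : Diagram m n) :
    (skewAdj D).det ≠ 0 ↔ IsNondegenerate (formStates D n) := by
  rw [ne_eq, det_skewAdj_eq_zero_iff, exists_isKernelVec_iff]
  exact ⟨fun h r hr => by_contra fun hr0 => h ⟨r, hr0, hr⟩, fun h ⟨r, hr0, hr⟩ => hr0 (h r hr)⟩

end Primitive

theorem isRegular_isCauchon (m : ℕ) :
    Language.IsRegular ({w | IsCauchon (toDiagram w)} : Language (Col m)) :=
  isRegular_of_scanColumns cauchonStep _ (fun _ => IsCauchon) (fun t => t.2 = true)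
    fun _ => isCauchon_iff_scanColumns

theorem isRegular_det_skewAdj_ne_zero (m : ℕ) :
    Language.IsRegular ({w | (skewAdj (toDiagram w)).det ≠ 0} : Language (Col m)) :=
  isRegular_of_scanColumns stepForms _ (fun _ D => (skewAdj D).det ≠ 0) IsNondegenerate
    fun _ => det_skewAdj_ne_zero_iff

end CauchonDiagram

theorem primitive_cauchon_regular_general (m : ℕ) :
    Language.IsRegular
      ({ w : List (Col m) |
          IsCauchon (toDiagram w) ∧ (skewAdj (toDiagram w)).det ≠ 0 } :
        Language (Col m)) :=
  (CauchonDiagram.isRegular_isCauchon m).inf (CauchonDiagram.isRegular_det_skewAdj_ne_zero m)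

/-- For every positive integer `m`, the set of words over the
alphabet `Σ_m` of `m × 1` columns whose concatenation is a primitive Cauchon
diagram (a Cauchon diagram whose skew-adjacency matrix has nonzero determinant)
is a regular language. -/
theorem primitive_cauchon_regular (m : ℕ) (hm : 0 < m) :
    Language.IsRegular
      ({ w : List (Col m) |
          IsCauchon (toDiagram w) ∧ (skewAdj (toDiagram w)).det ≠ 0 } :
        Language (Col m)) :=
  primitive_cauchon_regular_general m
end
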